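/- arXiv:0908.1251 — 7 statements merged into one kernel-verified Lean document; each statement's English description precedes it below -/
import Mathlib

section
/- Let c > 1, M > 0, and define r : ℝ² → (0,∞) by r(x) := max{c|x|, M}. Then there exists α₀ > 0 such that for every α ∈ (0, α₀], the function x ↦ r(x)^{−α} is (σ,r)-supermedian on ℝ², i.e. (1/2π)∫₀^{2π} r(x + r(x)e^{it})^{−α} dt ≤ r(x)^{−α} for every x ∈ ℝ². -/
/-!
Write `ρ = r(x)`. Since `‖x‖ ≤ ρ / c < ρ`, the origin lies inside the circle of radius `ρ`
about `x`, so the circle average of `log ‖z‖` is `log ρ` (Jensen); as `r(z) ≥ c ‖z‖`, the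
average of `u = log (r / ρ)` is at least `log c > 0`. On that circle `r / ρ ∈ [c - 1, c + 1]`,
so `|u| ≤ K := max |log (c - 1)| (log (c + 1))`, and `e^{-α u} ≤ 1 - α u + α² K²` once
`α K ≤ 1`. Averaging gives
`σ(r^{-α}) ≤ ρ^{-α} (1 - α log c + α² K²) ≤ ρ^{-α}` for `α ≤ log c / K²`.
-/

open Real Metric

lemma exp_le_one_add_add_sq {w K : ℝ} (hw : |w| ≤ K) (hK : K ≤ 1) :
    exp w ≤ 1 + w + K ^ 2 := by
  have h := (abs_le.1 (abs_exp_sub_one_sub_id_le (hw.trans hK))).2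
  have hsq : w ^ 2 ≤ K ^ 2 := by
    rw [← sq_abs]; exact pow_le_pow_left₀ (abs_nonneg w) hw 2
  linarith

theorem circleAverage_rpow_neg_le {f : ℂ → ℝ} {c : ℂ} {R ρ K δ α : ℝ}
    (hf : ContinuousOn f (sphere c |R|)) (hf_pos : ∀ z ∈ sphere c |R|, 0 < f z) (hρ : 0 < ρ)
    (hK : ∀ z ∈ sphere c |R|, |log (f z) - log ρ| ≤ K)
    (hδ : log ρ + δ ≤ circleAverage (fun z ↦ log (f z)) c R)
    (hα : 0 ≤ α) (hαK : α * K ≤ 1) (hα_log : α * K ^ 2 ≤ δ) :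
    circleAverage (fun z ↦ f z ^ (-α)) c R ≤ ρ ^ (-α) := by
  set A := ρ ^ (-α) * (1 + α * log ρ + (α * K) ^ 2)
  set B := ρ ^ (-α) * α
  have hρα : 0 < ρ ^ (-α) := rpow_pos_of_pos hρ _
  have hlog : CircleIntegrable (fun z ↦ log (f z)) c R :=
    (hf.log fun z hz ↦ (hf_pos z hz).ne').circleIntegrable'
  have hBlog : CircleIntegrable (fun z ↦ B * log (f z)) c R := hlog.const_smul
  have hpointwise : ∀ z ∈ sphere c |R|, f z ^ (-α) ≤ A - B * log (f z) := by
    intro z hz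
    have hw : |-α * (log (f z) - log ρ)| ≤ α * K := by
      rw [abs_mul, abs_neg, abs_of_nonneg hα]
      exact mul_le_mul_of_nonneg_left (hK z hz) hα
    have hsplit : f z ^ (-α) = ρ ^ (-α) * exp (-α * (log (f z) - log ρ)) := by
      rw [rpow_def_of_pos (hf_pos z hz), rpow_def_of_pos hρ, ← exp_add]
      ring_nf
    rw [hsplit]
    calc ρ ^ (-α) * exp (-α * (log (f z) - log ρ))
        ≤ ρ ^ (-α) * (1 + -α * (log (f z) - log ρ) + (α * K) ^ 2) :=
          mul_le_mul_of_nonneg_left (exp_le_one_add_add_sq hw hαK) hρα.le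
      _ = A - B * log (f z) := by ring
  have havg : circleAverage (fun z ↦ A - B * log (f z)) c R
      = A - B * circleAverage (fun z ↦ log (f z)) c R := by
    rw [circleAverage_fun_sub (circleIntegrable_const A c R) hBlog, circleAverage_const,
      ← smul_eq_mul, ← circleAverage_fun_smul]
    rfl
  calc circleAverage (fun z ↦ f z ^ (-α)) c R
      ≤ circleAverage (fun z ↦ A - B * log (f z)) c R :=
        circleAverage_mono ((hf.rpow_const fun z hz ↦ Or.inl (hf_pos z hz).ne').circleIntegrable')
          ((circleIntegrable_const A c R).sub hBlog) hpointwise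
    _ = A - B * circleAverage (fun z ↦ log (f z)) c R := havg
    _ ≤ A - B * (log ρ + δ) := by gcongr
    _ = ρ ^ (-α) * (1 - α * (δ - α * K ^ 2)) := by ring
    _ ≤ ρ ^ (-α) := by
        have : 0 ≤ α * (δ - α * K ^ 2) := mul_nonneg hα (by linarith)
        nlinarith

noncomputable def maxRadius (c M : ℝ) (z : ℂ) : ℝ := max (c * ‖z‖) M

section maxRadius

variable {c M : ℝ}

lemma maxRadius_pos (hM : 0 < M) (z : ℂ) : 0 < maxRadius c M z :=
  hM.trans_le (le_max_right _ _)

lemma continuous_maxRadius : Continuous (maxRadius c M) := by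
  unfold maxRadius; fun_prop

lemma norm_lt_maxRadius (hc : 1 < c) (hM : 0 < M) (x : ℂ) : ‖x‖ < maxRadius c M x := by
  have hx : c * ‖x‖ ≤ maxRadius c M x := le_max_left _ _
  have hpos := maxRadius_pos (c := c) hM x
  nlinarith [norm_nonneg x]

lemma maxRadius_mem_Icc_of_mem_sphere (hc : 0 ≤ c) {x z : ℂ}
    (hz : z ∈ sphere x |maxRadius c M x|) :
    maxRadius c M z ∈ Set.Icc ((c - 1) * maxRadius c M x) ((c + 1) * maxRadius c M x) := by
  set ρ := maxRadius c M x
  have hx : c * ‖x‖ ≤ ρ := le_max_left _ _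
  have hρ : 0 ≤ ρ := (mul_nonneg hc (norm_nonneg x)).trans hx
  rw [mem_sphere_iff_norm, abs_of_nonneg hρ] at hz
  have hlower : ρ - ‖x‖ ≤ ‖z‖ := by
    linarith [norm_sub_le z x]
  have hupper : ‖z‖ ≤ ρ + ‖x‖ := by
    linarith [norm_sub_norm_le z x]
  constructor
  · refine le_trans ?_ (le_max_left _ _)
    nlinarith [mul_le_mul_of_nonneg_left hlower hc]
  · refine max_le ?_ ?_
    · nlinarith [mul_le_mul_of_nonneg_left hupper hc]
    · have hM : M ≤ ρ := le_max_right _ _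
      nlinarith

lemma log_mul_norm_le_log_maxRadius (hc : 0 < c) {z : ℂ} (hz : z ≠ 0) :
    log c + log ‖z‖ ≤ log (maxRadius c M z) := by
  rw [← log_mul hc.ne' (norm_ne_zero_iff.2 hz)]
  exact log_le_log (by positivity) (le_max_left _ _)

lemma abs_log_maxRadius_sub_log_le (hc : 1 < c) (hM : 0 < M) {x z : ℂ}
    (hz : z ∈ sphere x |maxRadius c M x|) :
    |log (maxRadius c M z) - log (maxRadius c M x)| ≤ max |log (c - 1)| (log (c + 1)) := by
  have hρ := maxRadius_pos (c := c) hM x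
  obtain ⟨hlower, hupper⟩ := maxRadius_mem_Icc_of_mem_sphere (by linarith) hz
  rw [← log_div (maxRadius_pos hM z).ne' hρ.ne', abs_le]
  constructor
  · have h : log (c - 1) ≤ log (maxRadius c M z / maxRadius c M x) :=
      log_le_log (by linarith) ((le_div_iff₀ hρ).2 hlower)
    linarith [neg_abs_le (log (c - 1)), le_max_left |log (c - 1)| (log (c + 1))]
  · exact (log_le_log (div_pos (maxRadius_pos hM z) hρ) ((div_le_iff₀ hρ).2 hupper)).trans
      (le_max_right _ _)

lemma log_maxRadius_add_log_le_circleAverage (hc : 1 < c) (hM : 0 < M) (x : ℂ) :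
    log (maxRadius c M x) + log c ≤
      circleAverage (fun z ↦ log (maxRadius c M z)) x (maxRadius c M x) := by
  set ρ := maxRadius c M x
  have hx := norm_lt_maxRadius hc hM x
  have hzero : (0 : ℂ) ∈ closedBall x |ρ| := by
    rw [mem_closedBall, dist_comm, dist_zero_right, abs_of_pos (maxRadius_pos hM x)]
    exact hx.le
  calc log ρ + log c = circleAverage (fun z ↦ log c + log ‖z - 0‖) x ρ := by
        rw [circleAverage_fun_add (circleIntegrable_const _ x ρ)
          (circleIntegrable_log_norm_sub_const ρ), circleAverage_const,
          circleAverage_log_norm_sub_const_of_mem_closedBall hzero, add_comm]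
    _ ≤ circleAverage (fun z ↦ log (maxRadius c M z)) x ρ := by
        have hlog : Continuous fun z ↦ log (maxRadius c M z) :=
          continuous_maxRadius.log fun z ↦ (maxRadius_pos hM z).ne'
        refine circleAverage_mono ((circleIntegrable_const _ x ρ).add
          (circleIntegrable_log_norm_sub_const ρ)) hlog.continuousOn.circleIntegrable'
          fun z hz ↦ ?_
        have hz0 : z ≠ 0 := by
          rintro rfl
          rw [mem_sphere_iff_norm, zero_sub, norm_neg, abs_of_pos (maxRadius_pos hM x)] at hz
          exact hx.ne hz
        simpa using log_mul_norm_le_log_maxRadius (M := M) (by linarith) hz0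

end maxRadius

/-- Proposition 1.3 (circle-mean part): for `c > 1`, `M > 0` and
`r(x) := max{c|x|, M}`, the function `r^{-α}` is `(σ,r)`-supermedian on `ℝ² = ℂ`
provided `α > 0` is sufficiently small. -/
theorem stmt1 (c M : ℝ) (hc : 1 < c) (hM : 0 < M) :
    ∃ α₀ > (0:ℝ), ∀ α : ℝ, 0 < α → α ≤ α₀ → ∀ x : ℂ,
      (1 / (2 * Real.pi)) * (∫ t in (0:ℝ)..(2 * Real.pi),
        (max (c * ‖x + (max (c * ‖x‖) M : ℝ) *
            Complex.exp (t * Complex.I)‖) M) ^ (-α))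
      ≤ (max (c * ‖x‖) M) ^ (-α) := by
  set K := max |log (c - 1)| (log (c + 1))
  have hlogc : 0 < log c := log_pos hc
  have hK : log c ≤ K := (log_le_log (by linarith) (by linarith)).trans (le_max_right _ _)
  have hK0 : 0 < K := hlogc.trans_le hK
  refine ⟨log c / K ^ 2, by positivity, fun α hα hαα₀ x ↦ ?_⟩
  have hα_log : α * K ^ 2 ≤ log c := (le_div_iff₀ (by positivity)).1 hαα₀
  have hαK : α * K ≤ 1 := le_of_mul_le_mul_right (by nlinarith : α * K * K ≤ 1 * K) hK0
  rw [one_div]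
  exact circleAverage_rpow_neg_le continuous_maxRadius.continuousOn
    (fun z _ ↦ maxRadius_pos hM z) (maxRadius_pos hM x)
    (fun z hz ↦ abs_log_maxRadius_sub_log_le hc hM hz)
    (log_maxRadius_add_log_le_circleAverage hc hM x) hα.le hαK hα_log
end

section
/- Let c₀ ∈ (1,∞) be the unique zero of ψ(t) = (t+1)ln(t+1) + (t−1)ln(t−1) − 2t in (1,∞). Let M > 0 and let r : ℝ → (0,∞) satisfy r(x) ≤ c₀|x| + M for all x ∈ ℝ with |x| > M. Then every lower semicontinuous function f : ℝ → (−∞,∞] with f > −∞ everywhere which satisfies liminf_{|x|→∞} f(x)/ln|x| ≥ 0 and is (λ,r)-supermedian is constant. -/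
/-! The comparison function `dippedLog M β`, equal to `log |x|` for `|x| ≥ M` and with a linear
dip of depth `β` on `[-M, M]`, has interval means at most its value at every `x` with
`|x| > M`, for all radii up to `c₀ |x| + M`. For the largest radii this reduces to
`x ψ(t) ≤ M max (ψ (c₀ + 1)) 0` whenever `1 < t ≤ c₀ + M / x`, which follows from the convexity
of `ψ` and `ψ c₀ = 0`; this is where the constant `c₀` enters.

For `ε > 0` the lower semicontinuous function `f + ε dippedLog` tends to `⊤` at infinity by the
`liminf` hypothesis, so it attains a minimum `m`. Where `f` touches `m - ε dippedLog` from above,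
the supermedian inequality of `f` and the submedian inequality of `m - ε dippedLog` force equality
on a whole interval; so the contact set is open, and it is closed by lower semicontinuity. On a
half-line beyond `±M` this would make `f + ε dippedLog` constant, so the contact happens in
`[-M, M]`. Letting `ε → 0`, `f` attains its global minimum, and the same open-closed argument with
a constant comparison function shows that `f` equals this minimum everywhere. -/

open Filter MeasureTheory

/-- The interval mean `λ_{x,ρ}(f) = (1/(2ρ)) ∫_{x-ρ}^{x+ρ} f(s) ds` of an
`EReal`-valued function `f` on `ℝ`, computed as the supremum of the means of the
truncations `min (f, n)` (which agrees with the usual value for lower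
semicontinuous `f > -∞`, by monotone convergence). -/
noncomputable def intervalMeanE (f : ℝ → EReal) (x ρ : ℝ) : EReal :=
  ⨆ n : ℕ, (((1 / (2 * ρ)) * ∫ s in (x - ρ)..(x + ρ),
      (f s ⊓ (n : EReal)).toReal : ℝ) : EReal)

/-- `ψ(t) = (t+1)ln(t+1) + (t-1)ln(t-1) - 2t`. -/
noncomputable def psi (t : ℝ) : ℝ :=
  (t + 1) * Real.log (t + 1) + (t - 1) * Real.log (t - 1) - 2 * t

open Set Real Topology

lemma LowerSemicontinuous.exists_forall_le_of_eventually_le {α β : Type*} [TopologicalSpace α]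
    [LinearOrder β] {G : α → β} (hG : LowerSemicontinuous G) (p : α)
    (h : ∀ᶠ y in cocompact α, G p ≤ G y) : ∃ x, ∀ y, G x ≤ G y := by
  obtain ⟨K, hK, hKc⟩ := mem_cocompact.1 h
  obtain ⟨x, -, hx⟩ := (hG.lowerSemicontinuousOn _).exists_isMinOn
    (insert_nonempty p K) (hK.insert p)
  refine ⟨x, fun y => ?_⟩
  by_cases hy : y ∈ K
  · exact hx (mem_insert_of_mem p hy)
  · exact (hx (mem_insert p K)).trans (hKc hy)

lemma EReal.le_coe_of_forall_pos_le_coe_add_mul {x : EReal} {a C : ℝ}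
    (h : ∀ ε > 0, x ≤ ((a + ε * C : ℝ) : EReal)) : x ≤ a := by
  have hlim : Tendsto (fun ε : ℝ => ((a + ε * C : ℝ) : EReal)) (𝓝[>] 0) (𝓝 (a : EReal)) := by
    refine (continuous_coe_real_ereal.tendsto a).comp (Tendsto.mono_left ?_ nhdsWithin_le_nhds)
    simpa using (Continuous.tendsto (f := fun ε : ℝ => a + ε * C) (by fun_prop) 0)
  exact ge_of_tendsto hlim (eventually_nhdsWithin_of_forall h)

lemma psi_one_neg : psi 1 < 0 := by
  norm_num [psi]
  linarith [Real.log_two_lt_d9]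

lemma convexOn_psi : ConvexOn ℝ (Ici 1) psi := by
  have hplus : ConvexOn ℝ (Ici 1) fun t : ℝ => (t + 1) * log (t + 1) := by
    refine ((convexOn_mul_log.translate_right 1).subset ?_ (convex_Ici 1)).congr ?_
    · intro t ht; simp only [mem_preimage, mem_Ici] at *; linarith
    · intro t _; simp [add_comm]
  have hminus : ConvexOn ℝ (Ici 1) fun t : ℝ => (t - 1) * log (t - 1) := by
    refine ((convexOn_mul_log.translate_right (-1)).subset ?_ (convex_Ici 1)).congr ?_
    · intro t ht; simp only [mem_preimage, mem_Ici] at *; linarith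
    · intro t _; simp [sub_eq_neg_add]
  exact (hplus.add hminus).sub (concaveOn_id (convex_Ici 1) |>.smul (by norm_num : (0:ℝ) ≤ 2))

lemma psi_le_mul_max {c₀ δ t : ℝ} (hc₀1 : 1 < c₀) (hc₀ : psi c₀ = 0) (hδ0 : 0 ≤ δ) (hδ1 : δ ≤ 1)
    (ht1 : 1 ≤ t) (ht : t ≤ c₀ + δ) : psi t ≤ δ * max (psi (c₀ + 1)) 0 := by
  have hK : 0 ≤ max (psi (c₀ + 1)) 0 := le_max_right _ _
  rcases le_total t c₀ with htc | hct
  · have hseg : t ∈ segment ℝ 1 c₀ := by rw [segment_eq_Icc hc₀1.le]; exact ⟨ht1, htc⟩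
    have := convexOn_psi.le_on_segment (mem_Ici.2 le_rfl) (mem_Ici.2 hc₀1.le) hseg
    rw [hc₀, max_eq_right psi_one_neg.le] at this
    nlinarith
  · have hchord := convexOn_psi.2 (mem_Ici.2 hc₀1.le) (mem_Ici.2 (by linarith : (1:ℝ) ≤ c₀ + 1))
      (by linarith : 0 ≤ c₀ + 1 - t) (by linarith : 0 ≤ t - c₀) (by ring)
    simp only [smul_eq_mul, hc₀] at hchord
    rw [show (c₀ + 1 - t) * c₀ + (t - c₀) * (c₀ + 1) = t by ring] at hchord
    nlinarith [le_max_left (psi (c₀ + 1)) 0]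

lemma integral_const_add_mul (p q u v : ℝ) :
    ∫ s in u..v, (p + q * s) = (v - u) * p + q * (v ^ 2 - u ^ 2) / 2 := by
  rw [intervalIntegral.integral_add intervalIntegrable_const
      ((continuous_const_mul q).intervalIntegrable _ _), intervalIntegral.integral_const,
    intervalIntegral.integral_const_mul, integral_id, smul_eq_mul]
  ring

noncomputable def dippedLog (M β s : ℝ) : ℝ :=
  log (max |s| M) - β * max (1 - |s| / M) 0

section dippedLog

variable {M β s : ℝ}

lemma dippedLog_neg (M β s : ℝ) : dippedLog M β (-s) = dippedLog M β s := by
  simp [dippedLog]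

lemma dippedLog_of_le_abs (hM : 0 < M) (hs : M ≤ |s|) : dippedLog M β s = log |s| := by
  have : 1 ≤ |s| / M := (one_le_div hM).2 hs
  simp [dippedLog, max_eq_left hs, max_eq_right (by linarith : 1 - |s| / M ≤ 0)]

lemma dippedLog_of_abs_le (hM : 0 < M) (hs : |s| ≤ M) :
    dippedLog M β s = log M - β * (1 - |s| / M) := by
  have : |s| / M ≤ 1 := (div_le_one hM).2 hs
  rw [dippedLog, max_eq_right hs, max_eq_left (by linarith)]

lemma continuous_dippedLog (hM : 0 < M) (β : ℝ) : Continuous (dippedLog M β) := by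
  refine ((continuous_abs.max continuous_const).log fun s => ?_).sub
    (continuous_const.mul (((continuous_const.sub (continuous_abs.div_const M))).max
      continuous_const))
  exact (hM.trans_le (le_max_right _ _)).ne'

lemma log_sub_le_dippedLog (hM : 0 < M) (hβ : 0 ≤ β) (s : ℝ) : log M - β ≤ dippedLog M β s := by
  rcases le_total M |s| with h | h
  · rw [dippedLog_of_le_abs hM h]
    linarith [log_le_log hM h]
  · rw [dippedLog_of_abs_le hM h]
    nlinarith [div_nonneg (abs_nonneg s) hM.le]

lemma dippedLog_le_tangent (hM : 0 < M) (hβ : 1 ≤ β) {x : ℝ} (hx : M ≤ x) (hs : 0 ≤ s) :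
    dippedLog M β s ≤ (log x - 1) + x⁻¹ * s := by
  have hx0 : 0 < x := hM.trans_le hx
  have htangent : ∀ y, 0 < y → log y ≤ (log x - 1) + x⁻¹ * y := by
    intro y hy
    have := log_le_sub_one_of_pos (div_pos hy hx0)
    rw [log_div hy.ne' hx0.ne', div_eq_inv_mul] at this
    linarith
  rcases le_total M s with h | h
  · rw [dippedLog_of_le_abs hM (h.trans (le_abs_self s)), abs_of_nonneg hs]
    exact htangent s (hM.trans_le h)
  · rw [dippedLog_of_abs_le hM (by rwa [abs_of_nonneg hs]), abs_of_nonneg hs]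
    have hM' := htangent M hM
    have hs' : s / M ≤ 1 := (div_le_one hM).2 h
    have : x⁻¹ * M * (s / M) = x⁻¹ * s := by field_simp
    nlinarith [log_le_log hM hx, div_nonneg hs hM.le]

end dippedLog

section integral

variable {M β : ℝ}

lemma integral_dippedLog_zero_self (hM : 0 < M) (β : ℝ) :
    ∫ s in (0)..M, dippedLog M β s = M * log M - β * M / 2 := by
  have hcongr : EqOn (dippedLog M β) (fun s => (log M - β) + β / M * s) (uIcc 0 M) := by
    intro s hs
    rw [uIcc_of_le hM.le] at hs
    rw [dippedLog_of_abs_le hM (by rw [abs_of_nonneg hs.1]; exact hs.2), abs_of_nonneg hs.1]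
    ring
  rw [intervalIntegral.integral_congr hcongr, integral_const_add_mul]
  field_simp
  ring

lemma integral_dippedLog_neg_self (hM : 0 < M) (β : ℝ) :
    ∫ s in (-M)..M, dippedLog M β s = 2 * M * log M - β * M := by
  have hsymm : ∫ s in (-M)..0, dippedLog M β s = ∫ s in (0)..M, dippedLog M β s := by
    simpa [dippedLog_neg] using
      (intervalIntegral.integral_comp_neg (a := 0) (b := M) (dippedLog M β)).symm
  rw [← intervalIntegral.integral_add_adjacent_intervals (b := 0)
    ((continuous_dippedLog hM β).intervalIntegrable _ _)
    ((continuous_dippedLog hM β).intervalIntegrable _ _), hsymm, integral_dippedLog_zero_self hM]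
  ring

lemma integral_dippedLog_eq_integral_log_add (hM : 0 < M) {a b : ℝ} (ha : a ≤ -M) (hb : M ≤ b) :
    ∫ s in a..b, dippedLog M β s = (∫ s in a..b, log s) + (2 - β) * M := by
  have hint : ∀ u v, IntervalIntegrable (dippedLog M β) volume u v :=
    fun u v => (continuous_dippedLog hM β).intervalIntegrable u v
  have hlog : ∀ u v : ℝ, IntervalIntegrable log volume u v :=
    fun _ _ => intervalIntegral.intervalIntegrable_log'
  have hleft : ∫ s in a..(-M), dippedLog M β s = ∫ s in a..(-M), log s := by
    refine intervalIntegral.integral_congr fun s hs => ?_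
    rw [uIcc_of_le ha] at hs
    rw [dippedLog_of_le_abs hM (by rw [abs_of_neg (by linarith [hs.2])]; linarith [hs.2]),
      log_abs]
  have hright : ∫ s in M..b, dippedLog M β s = ∫ s in M..b, log s := by
    refine intervalIntegral.integral_congr fun s hs => ?_
    rw [uIcc_of_le hb] at hs
    rw [dippedLog_of_le_abs hM (hs.1.trans (le_abs_self s)), log_abs]
  have hlog_mid : ∫ s in (-M)..M, log s = 2 * M * log M - 2 * M := by
    rw [integral_log, log_neg_eq_log]
    ring
  rw [← intervalIntegral.integral_add_adjacent_intervals (hint a (-M)) (hint (-M) b),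
    ← intervalIntegral.integral_add_adjacent_intervals (hint (-M) M) (hint M b),
    ← intervalIntegral.integral_add_adjacent_intervals (hlog a (-M)) (hlog (-M) b),
    ← intervalIntegral.integral_add_adjacent_intervals (hlog (-M) M) (hlog M b),
    hleft, hright, integral_dippedLog_neg_self hM, hlog_mid]
  ring

lemma integral_log_eq_psi {x t : ℝ} (hx : 0 < x) (ht : 1 < t) :
    ∫ s in (x - x * t)..(x + x * t), log s = 2 * (x * t) * log x + x * psi t := by
  have hminus : x - x * t = -(x * (t - 1)) := by ring
  have hplus : x + x * t = x * (t + 1) := by ring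
  rw [integral_log, hminus, hplus, log_neg_eq_log, log_mul hx.ne' (by linarith),
    log_mul hx.ne' (by linarith), psi]
  ring

end integral

section supermedian

variable {M β x ρ : ℝ}

lemma integral_dippedLog_le_of_le_self (hM : 0 < M) (hβ : 1 ≤ β) (hx : M < x) (hρ : 0 ≤ ρ)
    (hρx : ρ ≤ x) : ∫ s in (x - ρ)..(x + ρ), dippedLog M β s ≤ 2 * ρ * log x := by
  have hx0 : 0 < x := hM.trans hx
  calc ∫ s in (x - ρ)..(x + ρ), dippedLog M β s
      ≤ ∫ s in (x - ρ)..(x + ρ), ((log x - 1) + x⁻¹ * s) :=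
        intervalIntegral.integral_mono_on (by linarith)
          ((continuous_dippedLog hM β).intervalIntegrable _ _)
          ((continuous_const.add (continuous_const_mul _)).intervalIntegrable _ _)
          fun s hs => dippedLog_le_tangent hM hβ hx.le (by linarith [hs.1])
    _ = 2 * ρ * log x := by
        rw [integral_const_add_mul]
        field_simp
        ring

lemma integral_dippedLog_le_of_le_add (hM : 0 < M) (hβ : 3 ≤ β) (hx : M < x) (hxρ : x ≤ ρ)
    (hρ : ρ ≤ x + M) : ∫ s in (x - ρ)..(x + ρ), dippedLog M β s ≤ 2 * ρ * log x := by
  have hx0 : 0 < x := hM.trans hx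
  have hint := (continuous_dippedLog hM β).intervalIntegrable (μ := volume)
  have hleft : ∫ s in (x - ρ)..0, dippedLog M β s
      ≤ ∫ s in (x - ρ)..0, ((log x - β) + (-β / M) * s) := by
    refine intervalIntegral.integral_mono_on (by linarith) (hint _ _)
      ((continuous_const.add (continuous_const_mul _)).intervalIntegrable _ _) fun s hs => ?_
    rw [dippedLog_of_abs_le hM (by rw [abs_of_nonpos hs.2]; linarith [hs.1]),
      abs_of_nonpos hs.2]
    have : -β / M * s = β * (-s / M) := by ring
    linarith [log_le_log hM hx.le]
  have hright : ∫ s in (0)..(x + ρ), dippedLog M β s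
      ≤ ∫ s in (0)..(x + ρ), ((log x - 1) + x⁻¹ * s) :=
    intervalIntegral.integral_mono_on (by linarith) (hint _ _)
      ((continuous_const.add (continuous_const_mul _)).intervalIntegrable _ _)
      fun s hs => dippedLog_le_tangent hM (by linarith) hx.le hs.1
  rw [integral_const_add_mul] at hleft hright
  rw [← intervalIntegral.integral_add_adjacent_intervals (hint _ 0) (hint 0 _)]
  have hc : 0 ≤ ρ - x := by linarith
  have h1 : β * (ρ - x) / (2 * M) ≤ β / 2 := by
    rw [div_le_div_iff₀ (by positivity) (by norm_num)]; nlinarith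
  have h2 : (x + ρ) / (2 * x) ≤ 3 / 2 := by
    rw [div_le_div_iff₀ (by positivity) (by norm_num)]; nlinarith
  have key : (0 - (x - ρ)) * (log x - β) + -β / M * (0 ^ 2 - (x - ρ) ^ 2) / 2
      + ((x + ρ - 0) * (log x - 1) + x⁻¹ * ((x + ρ) ^ 2 - 0 ^ 2) / 2)
      = 2 * ρ * log x + (ρ - x) * (β * (ρ - x) / (2 * M) - β + (x + ρ) / (2 * x)) := by
    field_simp
    ring
  nlinarith [mul_nonneg hc (by linarith : 0 ≤ -(β * (ρ - x) / (2 * M) - β + (x + ρ) / (2 * x)))]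

variable {c₀ : ℝ}

lemma integral_dippedLog_le_of_add_lt (hc₀1 : 1 < c₀) (hc₀ : psi c₀ = 0) (hM : 0 < M)
    (hβ : max (psi (c₀ + 1)) 0 + 2 ≤ β) (hx : M < x) (hρ1 : x + M < ρ) (hρ2 : ρ ≤ c₀ * x + M) :
    ∫ s in (x - ρ)..(x + ρ), dippedLog M β s ≤ 2 * ρ * log x := by
  have hx0 : 0 < x := hM.trans hx
  set t := ρ / x
  have hρt : ρ = x * t := (mul_div_cancel₀ ρ hx0.ne').symm
  have ht1 : 1 < t := by rw [lt_div_iff₀ hx0]; linarith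
  have ht2 : t ≤ c₀ + M / x := by
    rw [div_le_iff₀ hx0, add_mul, div_mul_cancel₀ _ hx0.ne']; linarith
  have hMx : M / x ≤ 1 := (div_le_one hx0).2 hx.le
  have hpsi := psi_le_mul_max hc₀1 hc₀ (by positivity) hMx ht1.le ht2
  have hxpsi : x * psi t ≤ M * max (psi (c₀ + 1)) 0 := by
    calc x * psi t ≤ x * (M / x * max (psi (c₀ + 1)) 0) := by gcongr
      _ = M * max (psi (c₀ + 1)) 0 := by field_simp
  rw [integral_dippedLog_eq_integral_log_add hM (by linarith) (by linarith), hρt,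
    integral_log_eq_psi hx0 ht1]
  nlinarith

lemma integral_dippedLog_le_of_lt (hc₀1 : 1 < c₀) (hc₀ : psi c₀ = 0) (hM : 0 < M)
    (hβ : max (psi (c₀ + 1)) 0 + 3 ≤ β) (hx : M < x) (hρ0 : 0 < ρ) (hρ : ρ ≤ c₀ * x + M) :
    ∫ s in (x - ρ)..(x + ρ), dippedLog M β s ≤ 2 * ρ * dippedLog M β x := by
  have hK := le_max_right (psi (c₀ + 1)) 0
  rw [dippedLog_of_le_abs hM (hx.le.trans (le_abs_self x)), abs_of_pos (hM.trans hx)]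
  rcases le_total ρ x with h1 | h1
  · exact integral_dippedLog_le_of_le_self hM (by linarith) hx hρ0.le h1
  rcases le_or_gt ρ (x + M) with h2 | h2
  · exact integral_dippedLog_le_of_le_add hM (by linarith) hx h1 h2
  · exact integral_dippedLog_le_of_add_lt hc₀1 hc₀ hM (by linarith) hx h2 hρ

lemma integral_dippedLog_le (hc₀1 : 1 < c₀) (hc₀ : psi c₀ = 0) (hM : 0 < M)
    (hβ : max (psi (c₀ + 1)) 0 + 3 ≤ β) (hx : M < |x|) (hρ0 : 0 < ρ)
    (hρ : ρ ≤ c₀ * |x| + M) :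
    ∫ s in (x - ρ)..(x + ρ), dippedLog M β s ≤ 2 * ρ * dippedLog M β x := by
  rcases le_or_gt 0 x with h | h
  · rw [abs_of_nonneg h] at hx hρ
    exact integral_dippedLog_le_of_lt hc₀1 hc₀ hM hβ hx hρ0 hρ
  · rw [abs_of_neg h] at hx hρ
    calc ∫ s in (x - ρ)..(x + ρ), dippedLog M β s
        = ∫ s in (x - ρ)..(x + ρ), dippedLog M β (-s) := by simp only [dippedLog_neg]
      _ = ∫ s in (-x - ρ)..(-x + ρ), dippedLog M β s := by
          rw [intervalIntegral.integral_comp_neg]; congr 1 <;> ring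
      _ ≤ 2 * ρ * dippedLog M β (-x) := integral_dippedLog_le_of_lt hc₀1 hc₀ hM hβ hx hρ0 hρ
      _ = 2 * ρ * dippedLog M β x := by rw [dippedLog_neg]

end supermedian

section semicontinuous

variable {f : ℝ → EReal} {φ : ℝ → ℝ}

lemma LowerSemicontinuous.isOpen_setOf_coe_lt (hf : LowerSemicontinuous f) (hφ : Continuous φ) :
    IsOpen {z | (φ z : EReal) < f z} := by
  refine isOpen_iff_mem_nhds.2 fun y hy => ?_
  obtain ⟨t, hφt, htf⟩ := EReal.lt_iff_exists_real_btwn.1 hy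
  filter_upwards [hf y t htf, hφ.continuousAt.eventually_lt continuousAt_const
    (EReal.coe_lt_coe_iff.1 hφt)] with z hz hφz
  exact (EReal.coe_lt_coe_iff.2 hφz).trans hz

lemma LowerSemicontinuous.le_of_ae_le (hf : LowerSemicontinuous f) (hφ : Continuous φ)
    {U : Set ℝ} (hU : IsOpen U) (h : ∀ᵐ z, z ∈ U → f z ≤ φ z) : ∀ z ∈ U, f z ≤ φ z := by
  have hnull : volume (U ∩ {z | (φ z : EReal) < f z}) = 0 :=
    measure_eq_zero_iff_ae_notMem.2 (h.mono fun z hz hz' => (hz hz'.1).not_gt hz'.2)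
  have hempty := ((hU.inter (hf.isOpen_setOf_coe_lt hφ)).measure_eq_zero_iff volume).1 hnull
  exact fun z hz => not_lt.1 fun hlt => hempty.subset ⟨hz, hlt⟩

lemma eqOn_of_isPreconnected (hf : LowerSemicontinuous f) (hφ : Continuous φ)
    (hφf : ∀ z, (φ z : EReal) ≤ f z) {s : Set ℝ} (hs : IsPreconnected s)
    (hloc : ∀ y ∈ s, f y = φ y → ∀ᶠ z in 𝓝 y, f z = φ z) {y₀ : ℝ} (hy₀ : y₀ ∈ s)
    (hfy₀ : f y₀ = φ y₀) : EqOn f (fun z => (φ z : EReal)) s := by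
  by_contra hne
  obtain ⟨y₁, hy₁, hfy₁⟩ := not_forall₂.1 hne
  obtain ⟨w, -, hwu, hwv⟩ := hs (interior {z | f z = φ z}) {z | (φ z : EReal) < f z}
    isOpen_interior (hf.isOpen_setOf_coe_lt hφ)
    (fun y hy => (hφf y).eq_or_lt.imp (fun h => mem_interior_iff_mem_nhds.2 (hloc y hy h.symm)) id)
    ⟨y₀, hy₀, mem_interior_iff_mem_nhds.2 (hloc y₀ hy₀ hfy₀)⟩
    ⟨y₁, hy₁, (hφf y₁).lt_of_ne' hfy₁⟩
  have hfw : w ∈ {z | f z = φ z} := interior_subset hwu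
  exact (show f w = φ w from hfw).not_gt hwv

end semicontinuous

section intervalMean

variable {f : ℝ → EReal} {φ : ℝ → ℝ}

lemma EReal.coe_toReal_inf_natCast {a : EReal} (ha : a ≠ ⊥) (n : ℕ) :
    (((a ⊓ (n : EReal)).toReal : ℝ) : EReal) = a ⊓ (n : EReal) :=
  EReal.coe_toReal (ne_top_of_le_ne_top (EReal.natCast_ne_top n) inf_le_right)
    (by simp [ha, EReal.natCast_ne_bot n])

lemma intervalIntegrable_toReal_inf_natCast (hf : Measurable f) (hφ : Continuous φ)
    (hφf : ∀ z, (φ z : EReal) ≤ f z) (n : ℕ) (a b : ℝ) :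
    IntervalIntegrable (fun s => (f s ⊓ (n : EReal)).toReal) volume a b := by
  refine ((hφ.abs.add (continuous_const (y := (n : ℝ)))).intervalIntegrable a b).mono_fun'
    (hf.inf measurable_const).ereal_toReal.aestronglyMeasurable
    (Eventually.of_forall fun s => ?_)
  have hg := EReal.coe_toReal_inf_natCast (ne_bot_of_le_ne_bot (EReal.coe_ne_bot _) (hφf s)) n
  have hlow : -|φ s| ≤ (f s ⊓ (n : EReal)).toReal := EReal.coe_le_coe_iff.1 <| by
    rw [hg]
    exact le_inf ((EReal.coe_le_coe_iff.2 (neg_abs_le _)).trans (hφf s))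
      (EReal.coe_le_coe_iff.2 ((neg_nonpos.2 (abs_nonneg _)).trans n.cast_nonneg))
  have hup : (f s ⊓ (n : EReal)).toReal ≤ n :=
    EReal.coe_le_coe_iff.1 (by rw [hg]; exact inf_le_right)
  simp only [Pi.add_apply, Real.norm_eq_abs, abs_le]
  constructor <;> linarith [abs_nonneg (φ s)]

lemma eqOn_Ioo_of_intervalMeanE_le (hf : LowerSemicontinuous f)
    (hφ : Continuous φ) (hφf : ∀ z, (φ z : EReal) ≤ f z) {x ρ : ℝ} (hρ : 0 < ρ)
    (hmean : intervalMeanE f x ρ ≤ φ x)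
    (hφmean : 2 * ρ * φ x ≤ ∫ s in (x - ρ)..(x + ρ), φ s) :
    EqOn f (fun z => (φ z : EReal)) (Ioo (x - ρ) (x + ρ)) := by
  obtain ⟨B, hB⟩ := (isCompact_Icc (a := x - ρ) (b := x + ρ)).bddAbove_image hφ.continuousOn
  obtain ⟨n, hn⟩ := exists_nat_gt B
  have hφn : ∀ s ∈ Icc (x - ρ) (x + ρ), φ s < n := fun s hs => (hB ⟨s, hs, rfl⟩).trans_lt hn
  set g : ℝ → ℝ := fun s => (f s ⊓ (n : EReal)).toReal
  have hg : ∀ s, f s ⊓ (n : EReal) = g s := fun s =>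
    (EReal.coe_toReal_inf_natCast (ne_bot_of_le_ne_bot (EReal.coe_ne_bot _) (hφf s)) n).symm
  have hφg : ∀ s ∈ Icc (x - ρ) (x + ρ), φ s ≤ g s := fun s hs => EReal.coe_le_coe_iff.1 <|
    hg s ▸ le_inf (hφf s) (EReal.coe_le_coe_iff.2 (hφn s hs).le)
  have hg_int : IntervalIntegrable g volume (x - ρ) (x + ρ) :=
    intervalIntegrable_toReal_inf_natCast hf.measurable hφ hφf n _ _
  have hg_mean : ∫ s in (x - ρ)..(x + ρ), g s ≤ ∫ s in (x - ρ)..(x + ρ), φ s := by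
    have h := (le_iSup (fun n : ℕ => (((1 / (2 * ρ)) * ∫ s in (x - ρ)..(x + ρ),
      (f s ⊓ (n : EReal)).toReal : ℝ) : EReal)) n).trans hmean
    rw [EReal.coe_le_coe_iff, one_div, inv_mul_le_iff₀ (by positivity)] at h
    exact h.trans hφmean
  have hab : x - ρ ≤ x + ρ := by linarith
  have hφ_int : IntervalIntegrable φ volume (x - ρ) (x + ρ) := hφ.intervalIntegrable _ _
  have hzero : ∫ s in (x - ρ)..(x + ρ), (g s - φ s) = 0 :=
    le_antisymm (by rw [intervalIntegral.integral_sub hg_int hφ_int]; linarith)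
      (intervalIntegral.integral_nonneg hab fun s hs => sub_nonneg.2 (hφg s hs))
  have hae := (intervalIntegral.integral_eq_zero_iff_of_le_of_nonneg_ae hab
    ((ae_restrict_iff' measurableSet_Ioc).2 (Eventually.of_forall fun s hs =>
      sub_nonneg.2 (hφg s (Ioc_subset_Icc_self hs)))) (hg_int.sub hφ_int)).1 hzero
  have hle : ∀ᵐ s, s ∈ Ioo (x - ρ) (x + ρ) → f s ≤ φ s := by
    filter_upwards [(ae_restrict_iff' measurableSet_Ioc).1 hae] with s hs hsIoo
    have hgs : g s = φ s := sub_eq_zero.1 (hs (Ioo_subset_Ioc_self hsIoo))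
    refine not_lt.1 fun hlt => ?_
    have := lt_inf_iff.2 ⟨hlt, EReal.coe_lt_coe_iff.2 (hφn s (Ioo_subset_Icc_self hsIoo))⟩
    rw [EReal.coe_coe_eq_natCast, hg s, hgs] at this
    exact lt_irrefl _ this
  exact fun z hz => le_antisymm (hf.le_of_ae_le hφ isOpen_Ioo hle z hz) (hφf z)

lemma eqOn_of_intervalMeanE_le (hf : LowerSemicontinuous f) {r : ℝ → ℝ}
    (hr_pos : ∀ y, 0 < r y) (hf_med : ∀ y, intervalMeanE f y (r y) ≤ f y)
    (hφ : Continuous φ) (hφf : ∀ z, (φ z : EReal) ≤ f z) {s : Set ℝ} (hs : IsPreconnected s)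
    (hφmean : ∀ y ∈ s, 2 * r y * φ y ≤ ∫ z in (y - r y)..(y + r y), φ z) {y₀ : ℝ}
    (hy₀ : y₀ ∈ s) (hfy₀ : f y₀ = φ y₀) : EqOn f (fun z => (φ z : EReal)) s := by
  refine eqOn_of_isPreconnected hf hφ hφf hs (fun y hy hfy => ?_) hy₀ hfy₀
  filter_upwards [Ioo_mem_nhds (by linarith [hr_pos y] : y - r y < y)
    (by linarith [hr_pos y] : y < y + r y)] with z hz
  exact eqOn_Ioo_of_intervalMeanE_le hf hφ hφf (hr_pos y) (hfy ▸ hf_med y)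
    (hφmean y hy) hz

end intervalMean

section touching

variable {c₀ M β ε : ℝ} {f : ℝ → EReal}

lemma tendsto_add_mul_dippedLog (hM : 0 < M)
    (hf_liminf : 0 ≤ Filter.liminf
      (fun x : ℝ => f x / ((Real.log |x| : ℝ) : EReal))
      (Filter.comap (fun x : ℝ => |x|) Filter.atTop)) (hε : 0 < ε) (β : ℝ) :
    Tendsto (fun z => f z + ((ε * dippedLog M β z : ℝ) : EReal)) (cocompact ℝ) (𝓝 ⊤) := by
  rw [cocompact_eq_atBot_atTop, ← comap_abs_atTop, EReal.tendsto_nhds_top_iff_real]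
  intro C
  have hlog : Tendsto (fun z : ℝ => log |z|) (comap abs atTop) atTop :=
    tendsto_log_atTop.comp tendsto_comap
  have hlower : ∀ᶠ z in comap abs atTop, ((-(ε / 2) : ℝ) : EReal) < f z / (log |z| : EReal) :=
    eventually_lt_of_lt_liminf (lt_of_lt_of_le (by exact_mod_cast (by linarith : -(ε / 2) < 0))
      hf_liminf)
  filter_upwards [hlower, hlog.eventually_gt_atTop 0, hlog.eventually_gt_atTop (2 * C / ε),
    tendsto_comap.eventually_gt_atTop M] with z hfz hlog0 hlogC hzM
  rw [EReal.lt_div_iff (EReal.coe_pos.2 hlog0) (EReal.coe_ne_top _), ← EReal.coe_mul] at hfz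
  rw [dippedLog_of_le_abs hM hzM.le]
  rw [div_lt_iff₀ hε] at hlogC
  calc (C : EReal) < ((-(ε / 2) * log |z| + ε * log |z| : ℝ) : EReal) :=
        EReal.coe_lt_coe_iff.2 (by linarith)
    _ ≤ f z + ((ε * log |z| : ℝ) : EReal) := by
        rw [EReal.coe_add]
        exact add_le_add hfz.le le_rfl

lemma eqOn_of_touching_dippedLog {r : ℝ → ℝ} (hc₀1 : 1 < c₀) (hc₀ : psi c₀ = 0) (hM : 0 < M)
    (hβ : max (psi (c₀ + 1)) 0 + 3 ≤ β) (hr_pos : ∀ x, 0 < r x)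
    (hr : ∀ x : ℝ, M < |x| → r x ≤ c₀ * |x| + M) (hf_lsc : LowerSemicontinuous f)
    (hf_med : ∀ x : ℝ, intervalMeanE f x (r x) ≤ f x) (hε : 0 ≤ ε)
    {m : ℝ} (hφf : ∀ z, ((m - ε * dippedLog M β z : ℝ) : EReal) ≤ f z) {s : Set ℝ}
    (hs : IsPreconnected s) (hsM : ∀ y ∈ s, M < |y|) {x₀ : ℝ} (hx₀ : x₀ ∈ s)
    (hfx₀ : f x₀ = ((m - ε * dippedLog M β x₀ : ℝ) : EReal)) :
    EqOn f (fun z => ((m - ε * dippedLog M β z : ℝ) : EReal)) s := by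
  refine eqOn_of_intervalMeanE_le (φ := fun z => m - ε * dippedLog M β z) hf_lsc hr_pos hf_med
    (continuous_const.sub (continuous_const.mul (continuous_dippedLog hM β))) hφf hs
    (fun y hy => ?_) hx₀ hfx₀
  have hint := integral_dippedLog_le hc₀1 hc₀ hM hβ (hsM y hy) (hr_pos y) (hr y (hsM y hy))
  rw [intervalIntegral.integral_sub intervalIntegrable_const
    ((continuous_dippedLog hM β).intervalIntegrable _ _ |>.const_mul ε),
    intervalIntegral.integral_const, intervalIntegral.integral_const_mul, smul_eq_mul]
  nlinarith [mul_le_mul_of_nonneg_left hint hε]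

lemma exists_touching_dippedLog {r : ℝ → ℝ} (hc₀1 : 1 < c₀) (hc₀ : psi c₀ = 0) (hM : 0 < M)
    (hβ : max (psi (c₀ + 1)) 0 + 3 ≤ β) (hr_pos : ∀ x, 0 < r x)
    (hr : ∀ x : ℝ, M < |x| → r x ≤ c₀ * |x| + M) (hf_lsc : LowerSemicontinuous f)
    (hf_bot : ∀ x, f x ≠ ⊥)
    (hf_liminf : 0 ≤ Filter.liminf
      (fun x : ℝ => f x / ((Real.log |x| : ℝ) : EReal))
      (Filter.comap (fun x : ℝ => |x|) Filter.atTop))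
    (hf_med : ∀ x : ℝ, intervalMeanE f x (r x) ≤ f x) {p : ℝ} (hp : f p ≠ ⊤) (hε : 0 < ε) :
    ∃ x₀ ∈ Icc (-M) M, ∃ m : ℝ, f x₀ = ((m - ε * dippedLog M β x₀ : ℝ) : EReal) ∧
      ∀ z, ((m - ε * dippedLog M β z : ℝ) : EReal) ≤ f z := by
  set G : ℝ → EReal := fun z => f z + ((ε * dippedLog M β z : ℝ) : EReal)
  have hG_lsc : LowerSemicontinuous G :=
    hf_lsc.add' (continuous_coe_real_ereal.comp
      (continuous_const.mul (continuous_dippedLog hM β))).lowerSemicontinuous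
      fun z => EReal.continuousAt_add (Or.inr (EReal.coe_ne_bot _)) (Or.inr (EReal.coe_ne_top _))
  have hG_top := tendsto_add_mul_dippedLog hM hf_liminf hε β
  have hGp : G p < ⊤ := EReal.add_lt_top hp (EReal.coe_ne_top _)
  obtain ⟨x₀, hx₀⟩ := hG_lsc.exists_forall_le_of_eventually_le p
    ((hG_top.eventually (lt_mem_nhds hGp)).mono fun _ h => h.le)
  have hfx₀ : f x₀ ≠ ⊤ := fun h => by
    have := (hx₀ p).trans_lt hGp
    simp only [G, h, EReal.top_add_coe] at this
    exact lt_irrefl _ this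
  set m := (f x₀).toReal + ε * dippedLog M β x₀
  have hGx₀ : G x₀ = m := by
    simp only [G, m, EReal.coe_add, EReal.coe_toReal hfx₀ (hf_bot x₀)]
  have hφf : ∀ z, ((m - ε * dippedLog M β z : ℝ) : EReal) ≤ f z := fun z => by
    rw [EReal.coe_sub, EReal.sub_le_iff_le_add (Or.inl (EReal.coe_ne_bot _))
      (Or.inl (EReal.coe_ne_top _)), ← hGx₀]
    exact hx₀ z
  have hfx₀_eq : f x₀ = ((m - ε * dippedLog M β x₀ : ℝ) : EReal) := by
    simp only [m, add_sub_cancel_right, EReal.coe_toReal hfx₀ (hf_bot x₀)]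
  refine ⟨x₀, abs_le.1 (not_lt.1 fun hx₀M => ?_), m, hfx₀_eq, hφf⟩
  -- touching at `|x₀| > M` would make `G` constant on a half-line, but `G → ⊤` at infinity
  have hconst : ∀ {s : Set ℝ}, IsPreconnected s → (∀ y ∈ s, M < |y|) → x₀ ∈ s →
      ∀ y ∈ s, G y = m := fun hs hsM hx₀s y hy => by
    simp only [G, eqOn_of_touching_dippedLog hc₀1 hc₀ hM hβ hr_pos hr hf_lsc hf_med hε.le hφf hs
      hsM hx₀s hfx₀_eq hy, ← EReal.coe_add, sub_add_cancel]
  have hfar := hG_top.eventually (lt_mem_nhds (EReal.coe_lt_top m))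
  rw [cocompact_eq_atBot_atTop, eventually_sup] at hfar
  rcases lt_abs.1 hx₀M with hpos | hneg
  · obtain ⟨y, hy, hyM⟩ := (hfar.2.and (eventually_gt_atTop M)).exists
    exact hy.ne' (hconst isPreconnected_Ioi (fun y hy => hy.trans_le (le_abs_self y)) hpos y hyM)
  · obtain ⟨y, hy, hyM⟩ := (hfar.1.and (eventually_lt_atBot (-M))).exists
    exact hy.ne' (hconst isPreconnected_Iio
      (fun y hy => lt_abs.2 (Or.inr (by linarith [mem_Iio.1 hy])))
      (by linarith : x₀ < -M) y hyM)

end touching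

lemma exists_forall_le_of_supermedian {c₀ M : ℝ} {r : ℝ → ℝ} {f : ℝ → EReal} (hc₀1 : 1 < c₀)
    (hc₀ : psi c₀ = 0) (hM : 0 < M) (hr_pos : ∀ x, 0 < r x)
    (hr : ∀ x : ℝ, M < |x| → r x ≤ c₀ * |x| + M) (hf_lsc : LowerSemicontinuous f)
    (hf_bot : ∀ x, f x ≠ ⊥)
    (hf_liminf : 0 ≤ Filter.liminf
      (fun x : ℝ => f x / ((Real.log |x| : ℝ) : EReal))
      (Filter.comap (fun x : ℝ => |x|) Filter.atTop))
    (hf_med : ∀ x : ℝ, intervalMeanE f x (r x) ≤ f x) {p : ℝ} (hp : f p ≠ ⊤) :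
    ∃ x₁, f x₁ ≠ ⊤ ∧ ∀ z, f x₁ ≤ f z := by
  set β := max (psi (c₀ + 1)) 0 + 3
  obtain ⟨x₁, hx₁, hmin⟩ := (hf_lsc.lowerSemicontinuousOn (Icc (-M) M)).exists_isMinOn
    (nonempty_Icc.2 (by linarith)) isCompact_Icc
  -- the touching points of `m - ε * dippedLog` stay in `[-M, M]`, where `f x₁` is minimal
  have hbound : ∀ ε > 0, ∃ m : ℝ, f x₁ ≤ ((m - ε * (log M - β) : ℝ) : EReal) ∧
      ∀ z, ((m - ε * dippedLog M β z : ℝ) : EReal) ≤ f z := fun ε hε => by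
    obtain ⟨x₀, hx₀, m, hfx₀, hφf⟩ := exists_touching_dippedLog hc₀1 hc₀ hM le_rfl hr_pos hr hf_lsc
      hf_bot hf_liminf hf_med hp hε
    refine ⟨m, (hmin hx₀).trans (hfx₀.trans_le (EReal.coe_le_coe_iff.2 ?_)), hφf⟩
    nlinarith [log_sub_le_dippedLog hM (by positivity : (0 : ℝ) ≤ β) x₀]
  have hx₁_top : f x₁ ≠ ⊤ := by
    obtain ⟨m, hm, -⟩ := hbound 1 one_pos
    exact ne_top_of_le_ne_top (EReal.coe_ne_top _) hm
  refine ⟨x₁, hx₁_top, fun z => ?_⟩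
  rcases eq_or_ne (f z) ⊤ with hz | hz
  · exact hz ▸ le_top
  rw [← EReal.coe_toReal hz (hf_bot z)]
  refine EReal.le_coe_of_forall_pos_le_coe_add_mul
    (C := dippedLog M β z - (log M - β)) fun ε hε => ?_
  obtain ⟨m, hm, hφf⟩ := hbound ε hε
  have hmz := hφf z
  rw [← EReal.coe_toReal hz (hf_bot z), EReal.coe_le_coe_iff] at hmz
  exact hm.trans (EReal.coe_le_coe_iff.2 (by linarith))

/-- Proposition 1.4.1 (liminf version): with `c₀` the unique zero of `ψ` in `(1,∞)`,
if `r(x) ≤ c₀|x| + M` for `|x| > M`, then every lower semicontinuous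
`(λ,r)`-supermedian function `f : ℝ → (-∞,∞]` with
`liminf_{|x|→∞} f(x)/ln|x| ≥ 0` is constant. -/
theorem stmt3 (c₀ M : ℝ) (hc₀1 : 1 < c₀) (hc₀ : psi c₀ = 0) (hM : 0 < M)
    (r : ℝ → ℝ) (hr_pos : ∀ x, 0 < r x)
    (hr : ∀ x : ℝ, M < |x| → r x ≤ c₀ * |x| + M)
    (f : ℝ → EReal) (hf_lsc : LowerSemicontinuous f) (hf_bot : ∀ x, f x ≠ ⊥)
    (hf_liminf : 0 ≤ Filter.liminf
      (fun x : ℝ => f x / ((Real.log |x| : ℝ) : EReal))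
      (Filter.comap (fun x : ℝ => |x|) Filter.atTop))
    (hf_med : ∀ x : ℝ, intervalMeanE f x (r x) ≤ f x) :
    ∃ C : EReal, ∀ x, f x = C := by
  by_cases htop : ∀ x, f x = ⊤
  · exact ⟨⊤, htop⟩
  obtain ⟨p, hp⟩ := not_forall.1 htop
  obtain ⟨x₁, hx₁, hmin⟩ := exists_forall_le_of_supermedian hc₀1 hc₀ hM hr_pos hr hf_lsc hf_bot
    hf_liminf hf_med hp
  set m := (f x₁).toReal
  have hfx₁ : f x₁ = m := (EReal.coe_toReal hx₁ (hf_bot x₁)).symm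
  have hconst := eqOn_of_intervalMeanE_le (φ := fun _ => m) hf_lsc hr_pos hf_med
    continuous_const (fun z => hfx₁ ▸ hmin z) isPreconnected_univ
    (fun y _ => by rw [intervalIntegral.integral_const, smul_eq_mul]; linarith)
    (mem_univ x₁) hfx₁
  exact ⟨m, fun x => hconst (mem_univ x)⟩
end

section
/- Define f : ℝ² → ℝ by f(x) := max{1 − |x|, 0} and r : ℝ² → (0,∞) by r(x) := |x| + 2 + (|x| + 1)^{−1}. Then (a) for every x ∈ ℝ², σ_{x,r(x)}(f) = 0 ≤ f(x) (so f is a non-constant bounded (σ,r)-supermedian function), and (b) for all x, y ∈ ℝ² with x ≠ y, |r(x) − r(y)| < |x − y|. -/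
open Filter MeasureTheory

/-! Since `r(x) > |x| + 1`, every circle about `x` of radius `r(x)` lies outside the open unit
disc, where `f` vanishes, so all these circle means are `0`. Part (b) holds because `r` depends
only on `t = |x|`, through `t ↦ t + (t + 1)⁻¹ + 2`, whose slopes `1 - ((a + 1)(b + 1))⁻¹` lie
in `[0, 1)`. -/

lemma abs_sub_norm_le_norm_circleMap (c : ℂ) (R θ : ℝ) : |R| - ‖c‖ ≤ ‖circleMap c R θ‖ := by
  have h := norm_sub_le (circleMap c R θ) c
  rw [circleMap_sub_center, norm_circleMap_zero] at h
  linarith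

lemma intervalIntegral_comp_circleMap_eq_zero {f : ℂ → ℝ} {ρ R : ℝ} {c : ℂ}
    (hf : ∀ z : ℂ, ρ ≤ ‖z‖ → f z = 0) (hR : ‖c‖ + ρ ≤ |R|) (a b : ℝ) :
    ∫ t in a..b, f (circleMap c R t) = 0 := by
  have hzero : ∀ t : ℝ, f (circleMap c R t) = 0 := fun t =>
    hf _ (by linarith [abs_sub_norm_le_norm_circleMap c R t])
  simp only [hzero, intervalIntegral.integral_zero]

lemma add_inv_add_one_sub_add_inv_add_one (a b : ℝ) (ha : 0 ≤ a) (hb : 0 ≤ b) :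
    (a + (a + 1)⁻¹) - (b + (b + 1)⁻¹) = (a - b) * (1 - ((a + 1) * (b + 1))⁻¹) := by
  field_simp
  ring

lemma abs_add_inv_add_one_sub_lt {a b : ℝ} (ha : 0 ≤ a) (hb : 0 ≤ b) (hab : a ≠ b) :
    |(a + (a + 1)⁻¹) - (b + (b + 1)⁻¹)| < |a - b| := by
  have hc_pos : 0 < ((a + 1) * (b + 1))⁻¹ := by positivity
  have hc_le : ((a + 1) * (b + 1))⁻¹ ≤ 1 := inv_le_one_of_one_le₀ (by nlinarith)
  have hab' : 0 < |a - b| := abs_pos.mpr (sub_ne_zero_of_ne hab)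
  rw [add_inv_add_one_sub_add_inv_add_one a b ha hb, abs_mul,
    abs_of_nonneg (sub_nonneg.mpr hc_le)]
  nlinarith

/-- For `f(x) := (1 - |x|)⁺` and `r(x) := |x| + 2 + (|x|+1)⁻¹` on `ℝ² = ℂ`:
(a) `σ_{x,r(x)}(f) = 0 ≤ f(x)` for every `x` (so the bounded function `f` is a
non-constant `(σ,r)`-supermedian function), and
(b) `|r(x) - r(y)| < |x - y|` for all `x ≠ y`. -/
theorem stmt11 :
    let f : ℂ → ℝ := fun x => max (1 - ‖x‖) 0
    let r : ℂ → ℝ := fun x => ‖x‖ + 2 + (‖x‖ + 1)⁻¹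
    (∀ x : ℂ, (1 / (2 * Real.pi)) * (∫ t in (0:ℝ)..(2 * Real.pi),
        f (x + (r x : ℂ) * Complex.exp (t * Complex.I))) = 0 ∧ 0 ≤ f x) ∧
    (∃ x y : ℂ, f x ≠ f y) ∧
    (∀ x y : ℂ, x ≠ y → |r x - r y| < ‖x - y‖) := by
  intro f r
  refine ⟨fun x => ⟨?_, le_max_right _ _⟩, ⟨0, 2, by norm_num [f]⟩, fun x y hxy => ?_⟩
  · have hr : ‖x‖ + 1 ≤ |r x| := by
      rw [abs_of_pos (by positivity)]
      linarith [inv_pos.mpr (by positivity : (0 : ℝ) < ‖x‖ + 1)]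
    have hf : ∀ z : ℂ, 1 ≤ ‖z‖ → f z = 0 := fun z hz => max_eq_right (by linarith)
    have hint := intervalIntegral_comp_circleMap_eq_zero hf hr 0 (2 * Real.pi)
    unfold circleMap at hint
    rw [hint, mul_zero]
  · have hr : r x - r y = (‖x‖ + (‖x‖ + 1)⁻¹) - (‖y‖ + (‖y‖ + 1)⁻¹) := by ring
    rcases eq_or_ne ‖x‖ ‖y‖ with hnorm | hnorm
    · simpa [hr, hnorm] using sub_ne_zero_of_ne hxy
    · rw [hr]
      exact (abs_add_inv_add_one_sub_lt (norm_nonneg x) (norm_nonneg y) hnorm).trans_le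
        (abs_norm_sub_norm_le x y)
end

section
/- Define f : ℝ² → ℝ by f(x) := max{1 − |x|, 0} and r : ℝ² → (0,∞) by r(x) := 3 if |x| < 2 and r(x) := 1 if |x| ≥ 2. Then for every x ∈ ℝ², σ_{x,r(x)}(f) = 0 ≤ f(x); hence f is a non-constant bounded (σ,r)-supermedian function (here r is not continuous). -/
open Filter MeasureTheory

/-! Every point `x` lies at distance at least `1` from the circle of radius `r(x)` about the
origin, so the circle of radius `r(x)` about `x` avoids the open unit disc, on which alone `f`
is nonzero. -/

theorem abs_norm_sub_le_norm_add_smul {E : Type*} [SeminormedAddCommGroup E] [NormedSpace ℝ E]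
    {ρ : ℝ} (hρ : 0 ≤ ρ) (x : E) {w : E} (hw : ‖w‖ = 1) : |‖x‖ - ρ| ≤ ‖x + ρ • w‖ := by
  simpa [norm_smul, hw, abs_of_nonneg hρ] using abs_norm_sub_norm_le x (-(ρ • w))

theorem one_le_abs_sub_ite_lt_two (a : ℝ) : 1 ≤ |a - if a < 2 then 3 else 1| := by
  split_ifs with ha
  · rw [abs_of_neg (by linarith)]; linarith
  · rw [abs_of_nonneg (by linarith)]; linarith

/-- For `f(x) := (1 - |x|)⁺` on `ℝ² = ℂ` and the (discontinuous) radius function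
`r(x) := 3` if `|x| < 2`, `r(x) := 1` if `|x| ≥ 2`: `σ_{x,r(x)}(f) = 0 ≤ f(x)` for
every `x`, so the bounded function `f` is a non-constant `(σ,r)`-supermedian
function. -/
theorem stmt12 :
    let f : ℂ → ℝ := fun x => max (1 - ‖x‖) 0
    let r : ℂ → ℝ := fun x => if ‖x‖ < 2 then 3 else 1
    (∀ x : ℂ, (1 / (2 * Real.pi)) * (∫ t in (0:ℝ)..(2 * Real.pi),
        f (x + (r x : ℂ) * Complex.exp (t * Complex.I))) = 0 ∧ 0 ≤ f x) ∧
    (∃ x y : ℂ, f x ≠ f y) := by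
  intro f r
  refine ⟨fun x => ⟨?_, le_max_right _ _⟩, ⟨0, 1, by simp [f]⟩⟩
  have hr : 0 ≤ r x := by simp only [r]; split_ifs <;> norm_num
  have hcircle : ∀ t : ℝ, f (x + r x * Complex.exp (t * Complex.I)) = 0 := fun t => by
    have hfar := (one_le_abs_sub_ite_lt_two ‖x‖).trans
      (abs_norm_sub_le_norm_add_smul hr x (Complex.norm_exp_ofReal_mul_I t))
    rw [Complex.real_smul] at hfar
    exact max_eq_right (by linarith)
  simp [hcircle]
end

section
/- For x = (x₁, x₂) ∈ ℝ², define f(x) := min{1, |x₁|^{−1}} (with f(x) := 1 when x₁ = 0) and r(x) := 6 max{1, x₁²}. Then f is a continuous non-constant function with 0 ≤ f ≤ 1, r is continuous with liminf_{|x|→∞}(r(x) − |x|) = −∞, and f is (σ,r)-supermedian: σ_{x,r(x)}(f) ≤ f(x) for every x ∈ ℝ². -/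
/-!
Since `f x = g x₁` with `g s = 1 / max 1 |s|`, the circle mean at `x` with `b = x₁` is
`(1/2π) ∫₀^{2π} g (b + ρ cos t) dt` with `ρ = 6 max 1 b²`; for `|b| ≤ 1` the bound
`g ≤ 1 = g b` suffices. For `|b| > 1` the circle crosses the axis `x₁ = 0`, where `f` is
largest, at the angle `θ ∈ [0, π]` with `cos θ = -1/(6b)`. This `θ` is within `π/12` of
`π/2`, which gives `|cos t - cos θ| ≥ (3/10)|t - θ|` on `[0, π]`. On a window of width
`10/(9|b|)` around `θ` we use `g ≤ 1`; elsewhere `1/u ≤ 1/(4|b|) + |b|/u²` replaces the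
non-integrable `1/|t - θ|` by `1/(t - θ)²`. Each half of the circle then contributes at most
`π/(4|b|) + 20/(9|b|)`, and `2 (π/4 + 20/9) ≤ 2π` because `40/9 < 3π/2`.
-/

open Filter MeasureTheory Real Set intervalIntegral

noncomputable def invMaxOne (s : ℝ) : ℝ := (max 1 |s|)⁻¹

lemma invMaxOne_nonneg (s : ℝ) : 0 ≤ invMaxOne s := by unfold invMaxOne; positivity

lemma invMaxOne_le_one (s : ℝ) : invMaxOne s ≤ 1 :=
  inv_le_one_of_one_le₀ (le_max_left _ _)

lemma continuous_invMaxOne : Continuous invMaxOne :=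
  (continuous_const.max continuous_abs).inv₀ fun _ => by positivity

lemma invMaxOne_of_abs_le_one {s : ℝ} (hs : |s| ≤ 1) : invMaxOne s = 1 := by
  rw [invMaxOne, max_eq_left hs, inv_one]

lemma invMaxOne_of_one_le_abs {s : ℝ} (hs : 1 ≤ |s|) : invMaxOne s = |s|⁻¹ := by
  rw [invMaxOne, max_eq_right hs]

lemma invMaxOne_le_inv {s u : ℝ} (hu : 0 < u) (hus : u ≤ |s|) : invMaxOne s ≤ u⁻¹ :=
  inv_anti₀ hu (hus.trans (le_max_right _ _))

lemma ite_min_inv_eq_invMaxOne (s : ℝ) :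
    (if s = 0 then 1 else min 1 |s|⁻¹) = invMaxOne s := by
  rcases eq_or_ne s 0 with rfl | hs
  · simp [invMaxOne]
  rw [if_neg hs]
  rcases le_total |s| 1 with h | h
  · rw [invMaxOne_of_abs_le_one h, min_eq_left ((one_le_inv₀ (abs_pos.2 hs)).2 h)]
  · rw [invMaxOne_of_one_le_abs h, min_eq_right (inv_le_one_of_one_le₀ h)]

lemma abs_pi_div_two_sub_le {θ : ℝ} (h₀ : 0 ≤ θ) (hπ : θ ≤ π) :
    |π / 2 - θ| ≤ π / 2 * |cos θ| := by
  have hθ : |π / 2 - θ| ≤ π / 2 := abs_le.2 ⟨by linarith, by linarith⟩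
  have h := mul_abs_le_abs_sin hθ
  rw [sin_pi_div_two_sub] at h
  have hpi := pi_pos
  calc |π / 2 - θ| = π / 2 * (2 / π * |π / 2 - θ|) := by field_simp
    _ ≤ π / 2 * |cos θ| := by gcongr

lemma three_pi_div_twenty_le_sin {θ : ℝ} (h : |π / 2 - θ| ≤ 7 * π / 24) :
    3 * π / 20 ≤ sin θ := by
  rw [← cos_pi_div_two_sub]
  have hsq : (π / 2 - θ) ^ 2 ≤ (7 * π / 24) ^ 2 := sq_le_sq' (abs_le.1 h).1 (abs_le.1 h).2
  nlinarith [one_sub_sq_div_two_le_cos (x := π / 2 - θ), pi_lt_d2, pi_pos]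

lemma mul_abs_sub_le_abs_cos_sub_cos {t θ : ℝ} (ht₀ : 0 ≤ t) (htπ : t ≤ π)
    (hθ₀ : 0 ≤ θ) (hθπ : θ ≤ π) (hθ : |cos θ| ≤ 1 / 6) :
    3 / 10 * |t - θ| ≤ |cos t - cos θ| := by
  have hpi := pi_pos
  have hmid : |π / 2 - θ| ≤ π / 12 := by
    nlinarith [abs_pi_div_two_sub_le hθ₀ hθπ]
  have hsum : 3 * π / 20 ≤ |sin ((t + θ) / 2)| :=
    (three_pi_div_twenty_le_sin (abs_le.2 ⟨by linarith [(abs_le.1 hmid).1],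
      by linarith [(abs_le.1 hmid).2]⟩)).trans (le_abs_self _)
  have hdiff : 2 / π * |(t - θ) / 2| ≤ |sin ((t - θ) / 2)| :=
    mul_abs_le_abs_sin <| by
      rw [abs_div, abs_two, div_le_div_iff_of_pos_right two_pos]
      exact abs_sub_le_iff.2 ⟨by linarith, by linarith⟩
  rw [cos_sub_cos, abs_mul, abs_mul, abs_neg, abs_two]
  rw [abs_div, abs_two] at hdiff
  calc 3 / 10 * |t - θ| = 2 * (3 * π / 20) * (2 / π * (|t - θ| / 2)) := by field_simp; ring
    _ ≤ 2 * |sin ((t + θ) / 2)| * |sin ((t - θ) / 2)| := by gcongr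

lemma integral_inv_sub_sq {u v c : ℝ} (hc : c ∉ uIcc u v) :
    ∫ t in u..v, ((t - c) ^ 2)⁻¹ = (u - c)⁻¹ - (v - c)⁻¹ := by
  have h0 : (0 : ℝ) ∉ uIcc (u - c) (v - c) := by
    rw [← image_sub_const_uIcc]
    rintro ⟨t, ht, h⟩
    exact hc (sub_eq_zero.1 h ▸ ht)
  have := integral_zpow (n := -2) (Or.inr ⟨by norm_num, h0⟩)
  simp only [zpow_neg, zpow_ofNat] at this
  rw [integral_comp_sub_right (fun x => (x ^ 2)⁻¹), this]
  norm_num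
  ring

lemma intervalIntegrable_inv_sub_sq {u v c : ℝ} (hc : c ∉ uIcc u v) :
    IntervalIntegrable (fun t => ((t - c) ^ 2)⁻¹) volume u v :=
  ContinuousOn.intervalIntegrable <| (continuousOn_id.sub continuousOn_const).pow 2 |>.inv₀
    fun t ht => pow_ne_zero _ (sub_ne_zero.2 fun (h : t = c) => hc (h ▸ ht))

lemma integral_le_of_le_add_inv_sub_sq {h : ℝ → ℝ} {u v c α β : ℝ} (huv : u ≤ v)
    (hc : c ∉ Icc u v) (hint : IntervalIntegrable h volume u v)
    (hle : ∀ t ∈ Icc u v, h t ≤ α + β * ((t - c) ^ 2)⁻¹) :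
    ∫ t in u..v, h t ≤ (v - u) * α + β * ((u - c)⁻¹ - (v - c)⁻¹) := by
  rw [← uIcc_of_le huv] at hc hle
  have hg := intervalIntegrable_inv_sub_sq hc
  calc ∫ t in u..v, h t ≤ ∫ t in u..v, (α + β * ((t - c) ^ 2)⁻¹) :=
        integral_mono_on huv hint (intervalIntegrable_const.add (hg.const_mul β))
          fun t ht => hle t (uIcc_of_le huv ▸ ht)
    _ = (v - u) * α + β * ((u - c)⁻¹ - (v - c)⁻¹) := by
      rw [integral_add intervalIntegrable_const (hg.const_mul β),
        intervalIntegral.integral_const_mul,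
        integral_inv_sub_sq hc, intervalIntegral.integral_const, smul_eq_mul]

lemma integral_le_of_le_one_of_le_add_inv_sub_sq {h : ℝ → ℝ} {p q c B α β : ℝ}
    (hB : 0 < B) (hp : p ≤ c - B) (hq : c + B ≤ q) (hα : 0 ≤ α) (hβ : 0 ≤ β)
    (hint : IntervalIntegrable h volume p q) (hle_one : ∀ t ∈ Icc p q, h t ≤ 1)
    (hle : ∀ t ∈ Icc p q, B ≤ |t - c| → h t ≤ α + β * ((t - c) ^ 2)⁻¹) :
    ∫ t in p..q, h t ≤ (q - p) * α + 2 * B + 2 * β / B := by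
  have hsub : ∀ {u v}, u ∈ Icc p q → v ∈ Icc p q → IntervalIntegrable h volume u v :=
    fun hu hv => hint.mono_set (uIcc_subset_uIcc (Icc_subset_uIcc hu) (Icc_subset_uIcc hv))
  have hp' : c - B ∈ Icc p q := ⟨hp, by linarith⟩
  have hq' : c + B ∈ Icc p q := ⟨by linarith, hq⟩
  have hpq : p ∈ Icc p q := left_mem_Icc.2 (by linarith)
  have hqq : q ∈ Icc p q := right_mem_Icc.2 (by linarith)
  have hleft :
      ∫ t in p..c - B, h t ≤ (c - B - p) * α + β * ((p - c)⁻¹ - (c - B - c)⁻¹) :=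
    integral_le_of_le_add_inv_sub_sq hp (fun hc => by linarith [hc.2]) (hsub hpq hp')
      fun t ht => hle t ⟨ht.1, by linarith [ht.2]⟩
        (by rw [abs_sub_comm, abs_of_nonneg] <;> linarith [ht.2])
  have hright :
      ∫ t in c + B..q, h t ≤ (q - (c + B)) * α + β * ((c + B - c)⁻¹ - (q - c)⁻¹) :=
    integral_le_of_le_add_inv_sub_sq hq (fun hc => by linarith [hc.1]) (hsub hq' hqq)
      fun t ht => hle t ⟨by linarith [ht.1], ht.2⟩ (by rw [abs_of_nonneg] <;> linarith [ht.1])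
  have hmid : ∫ t in c - B..c + B, h t ≤ 2 * B := by
    calc ∫ t in c - B..c + B, h t ≤ ∫ _ in c - B..c + B, (1 : ℝ) :=
          integral_mono_on (by linarith) (hsub hp' hq') intervalIntegrable_const
            fun t ht => hle_one t ⟨by linarith [ht.1], by linarith [ht.2]⟩
      _ = 2 * B := by rw [intervalIntegral.integral_const, smul_eq_mul, mul_one]; ring
  rw [← integral_add_adjacent_intervals (hsub hpq hq') (hsub hq' hqq),
    ← integral_add_adjacent_intervals (hsub hpq hp') (hsub hp' hq')]
  have h1 : (p - c)⁻¹ ≤ 0 := inv_nonpos.2 (by linarith)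
  have h2 : 0 ≤ (q - c)⁻¹ := inv_nonneg.2 (by linarith)
  simp only [sub_sub_cancel_left, add_sub_cancel_left, inv_neg] at hleft hright
  rw [div_eq_mul_inv]
  linarith [mul_nonpos_of_nonneg_of_nonpos hβ h1, mul_nonneg hβ h2, mul_nonneg hα hB.le]

lemma integral_comp_cos_zero_two_pi {φ : ℝ → ℝ} (hφ : Continuous φ) :
    ∫ t in 0..2 * π, φ (cos t) = 2 * ∫ t in 0..π, φ (cos t) := by
  have hint : ∀ u v : ℝ, IntervalIntegrable (fun t => φ (cos t)) volume u v :=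
    fun u v => (hφ.comp continuous_cos).intervalIntegrable u v
  have hsymm : ∫ t in π..2 * π, φ (cos t) = ∫ t in 0..π, φ (cos t) := by
    have h := integral_comp_sub_left (fun t => φ (cos t)) (2 * π) (a := 0) (b := π)
    simp only [cos_two_pi_sub, sub_zero] at h
    rw [h, show 2 * π - π = π by ring]
  rw [← integral_add_adjacent_intervals (hint 0 π) (hint π (2 * π)), hsymm, two_mul]

lemma inv_le_inv_four_mul_add_div_sq {u a : ℝ} (hu : 0 < u) (ha : 0 < a) :
    u⁻¹ ≤ (4 * a)⁻¹ + a / u ^ 2 := by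
  have h : (4 * a)⁻¹ + a / u ^ 2 - u⁻¹ = (u - 2 * a) ^ 2 / (4 * a * u ^ 2) := by
    field_simp; ring
  nlinarith [div_nonneg (sq_nonneg (u - 2 * a)) (by positivity : (0:ℝ) ≤ 4 * a * u ^ 2)]

lemma abs_inv_six_mul_le {b : ℝ} (hb : 1 ≤ |b|) : |(6 * b)⁻¹| ≤ 1 / 6 := by
  rw [abs_inv, abs_mul, abs_of_pos (by norm_num : (0:ℝ) < 6), one_div]
  exact inv_anti₀ (by norm_num) (by linarith)

lemma cos_arccos_neg_inv_six_mul {b : ℝ} (hb : 1 ≤ |b|) :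
    cos (arccos (-(6 * b)⁻¹)) = -(6 * b)⁻¹ := by
  have := abs_le.1 (abs_inv_six_mul_le hb)
  exact cos_arccos (by linarith) (by linarith)

lemma invMaxOne_add_mul_cos_le {b t : ℝ} (hb : 1 < |b|) (ht : t ∈ Icc 0 π)
    (htθ : t ≠ arccos (-(6 * b)⁻¹)) :
    invMaxOne (b + 6 * b ^ 2 * cos t) ≤
      (4 * |b|)⁻¹ + 25 / (81 * |b| ^ 3) * ((t - arccos (-(6 * b)⁻¹)) ^ 2)⁻¹ := by
  set θ := arccos (-(6 * b)⁻¹)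
  have ha : 0 < |b| := by linarith
  have hb0 : b ≠ 0 := abs_pos.1 ha
  have hcosθ : cos θ = -(6 * b)⁻¹ := cos_arccos_neg_inv_six_mul hb.le
  have hrw : b + 6 * b ^ 2 * cos t = 6 * b ^ 2 * (cos t - cos θ) := by
    rw [hcosθ]; field_simp; ring
  have hkey : 3 / 10 * |t - θ| ≤ |cos t - cos θ| :=
    mul_abs_sub_le_abs_cos_sub_cos ht.1 ht.2 (arccos_nonneg _) (arccos_le_pi _)
      (by rw [hcosθ, abs_neg]; exact abs_inv_six_mul_le hb.le)
  set u := 9 / 5 * |b| ^ 2 * |t - θ|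
  have hu : 0 < u := by have := abs_pos.2 (sub_ne_zero.2 htθ); positivity
  have hus : u ≤ |b + 6 * b ^ 2 * cos t| := by
    rw [hrw, abs_mul, abs_of_nonneg (by positivity : (0:ℝ) ≤ 6 * b ^ 2), ← sq_abs]
    calc u = 6 * |b| ^ 2 * (3 / 10 * |t - θ|) := by ring
      _ ≤ 6 * |b| ^ 2 * |cos t - cos θ| := by gcongr
  calc invMaxOne (b + 6 * b ^ 2 * cos t) ≤ u⁻¹ := invMaxOne_le_inv hu hus
    _ ≤ (4 * |b|)⁻¹ + |b| / u ^ 2 := inv_le_inv_four_mul_add_div_sq hu ha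
    _ = _ := by
      rw [← sq_abs (t - θ)]; field_simp; ring

lemma integral_invMaxOne_add_mul_cos_le_of_one_lt {b : ℝ} (hb : 1 < |b|) :
    ∫ t in 0..π, invMaxOne (b + 6 * b ^ 2 * cos t) ≤ π / (4 * |b|) + 20 / (9 * |b|) := by
  set θ := arccos (-(6 * b)⁻¹)
  have ha : 0 < |b| := by linarith
  have hB : 0 < 5 / (9 * |b|) := by positivity
  have hB' : 5 / (9 * |b|) ≤ 5 / 9 := by
    gcongr; linarith
  have hθ : |π / 2 - θ| ≤ π / 12 := by
    have := abs_pi_div_two_sub_le (arccos_nonneg (-(6 * b)⁻¹)) (arccos_le_pi _)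
    rw [cos_arccos_neg_inv_six_mul hb.le, abs_neg] at this
    nlinarith [abs_inv_six_mul_le hb.le, pi_pos]
  have hpi := pi_gt_three
  obtain ⟨hθ₁, hθ₂⟩ := abs_le.1 hθ
  refine (integral_le_of_le_one_of_le_add_inv_sub_sq hB (by linarith) (by linarith)
    (by positivity) (by positivity)
    ((continuous_invMaxOne.comp (by fun_prop)).intervalIntegrable _ _)
    (fun t _ => invMaxOne_le_one _)
    fun t ht htθ => invMaxOne_add_mul_cos_le hb ht fun h => by
      rw [h, sub_self, abs_zero] at htθ; linarith).trans ?_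
  have htail : 2 * (25 / (81 * |b| ^ 3)) / (5 / (9 * |b|)) = 10 / (9 * |b| ^ 2) := by
    field_simp; ring
  have hsq : 10 / (9 * |b| ^ 2) ≤ 10 / (9 * |b|) := by gcongr; nlinarith
  rw [htail, sub_zero, ← div_eq_mul_inv]
  linarith [show 2 * (5 / (9 * |b|)) + 10 / (9 * |b|) = 20 / (9 * |b|) by ring]

lemma integral_invMaxOne_add_mul_cos_le (b : ℝ) :
    ∫ t in 0..2 * π, invMaxOne (b + 6 * max 1 (b ^ 2) * cos t) ≤ 2 * π * invMaxOne b := by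
  have hpi := pi_pos
  rcases le_or_gt |b| 1 with hb | hb
  · rw [invMaxOne_of_abs_le_one hb, mul_one]
    calc ∫ t in 0..2 * π, invMaxOne (b + 6 * max 1 (b ^ 2) * cos t)
        ≤ ∫ _ in 0..2 * π, (1 : ℝ) :=
          integral_mono_on (by positivity)
            ((continuous_invMaxOne.comp (by fun_prop)).intervalIntegrable _ _)
            intervalIntegrable_const fun t _ => invMaxOne_le_one _
      _ = 2 * π := by simp
  · have hb2 : max 1 (b ^ 2) = b ^ 2 := max_eq_right (by nlinarith [sq_abs b])
    rw [hb2, integral_comp_cos_zero_two_pi (φ := fun s => invMaxOne (b + 6 * b ^ 2 * s))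
      (continuous_invMaxOne.comp (by fun_prop)), invMaxOne_of_one_le_abs hb.le]
    have half := integral_invMaxOne_add_mul_cos_le_of_one_lt hb
    have ha : 0 < |b| := by linarith
    have : 20 / (9 * |b|) ≤ 3 * π / (4 * |b|) := by
      rw [div_le_div_iff₀ (by positivity) (by positivity)]; nlinarith [pi_gt_d2]
    calc 2 * ∫ t in 0..π, invMaxOne (b + 6 * b ^ 2 * cos t)
        ≤ 2 * (π / (4 * |b|) + 20 / (9 * |b|)) := by linarith
      _ ≤ 2 * π * |b|⁻¹ := by
        rw [show 2 * π * |b|⁻¹ = 2 * (π / (4 * |b|) + 3 * π / (4 * |b|)) by field_simp; ring]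
        linarith

lemma EReal.liminf_eq_bot_of_frequently_le {α : Type*} {l : Filter α} {u : α → EReal}
    (h : ∀ M : ℝ, ∃ᶠ x in l, u x ≤ M) : liminf u l = ⊥ := by
  rw [EReal.eq_bot_iff_forall_lt]
  intro M
  exact (liminf_le_of_frequently_le' (h (M - 1))).trans_lt (by exact_mod_cast sub_one_lt M)

lemma liminf_sub_norm_eq_bot {r : ℂ → ℝ} {C : ℝ}
    (hr : ∀ y : ℝ, r (y * Complex.I) ≤ C) :
    liminf (fun x : ℂ => ((r x - ‖x‖ : ℝ) : EReal)) (comap (‖·‖) atTop) = ⊥ := by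
  refine EReal.liminf_eq_bot_of_frequently_le fun M => ?_
  rw [frequently_comap, frequently_atTop]
  intro N
  have hy : 0 ≤ |N| + |C - M| := by positivity
  have hnorm : ‖((|N| + |C - M| : ℝ) : ℂ) * Complex.I‖ = |N| + |C - M| := by
    rw [norm_mul, Complex.norm_I, mul_one, Complex.norm_real, Real.norm_of_nonneg hy]
  refine ⟨_, le_add_of_le_of_nonneg (le_abs_self N) (abs_nonneg _), _, hnorm, ?_⟩
  rw [hnorm, EReal.coe_le_coe_iff]
  linarith [hr (|N| + |C - M|), le_abs_self (C - M), abs_nonneg N]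

/-- For `f(x) := min{1, |x₁|⁻¹}` (with value `1` when `x₁ = 0`) and
`r(x) := 6 max{1, x₁²}` on `ℝ² = ℂ` (writing `x₁ = Re x`): `f` is a continuous
non-constant function with `0 ≤ f ≤ 1`, `r` is continuous with
`liminf_{|x|→∞} (r(x) - |x|) = -∞`, and `f` is `(σ,r)`-supermedian. -/
theorem stmt13 :
    let f : ℂ → ℝ := fun x => if x.re = 0 then 1 else min 1 |x.re|⁻¹
    let r : ℂ → ℝ := fun x => 6 * max 1 (x.re ^ 2)
    Continuous f ∧ (∃ x y : ℂ, f x ≠ f y) ∧ (∀ x : ℂ, 0 ≤ f x ∧ f x ≤ 1) ∧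
    Continuous r ∧
    Filter.liminf (fun x : ℂ => ((r x - ‖x‖ : ℝ) : EReal))
      (Filter.comap (fun x : ℂ => ‖x‖) Filter.atTop) = ⊥ ∧
    ∀ x : ℂ, (1 / (2 * Real.pi)) * (∫ t in (0:ℝ)..(2 * Real.pi),
        f (x + (r x : ℂ) * Complex.exp (t * Complex.I))) ≤ f x := by
  intro f r
  have hf : f = fun x => invMaxOne x.re := funext fun x => ite_min_inv_eq_invMaxOne x.re
  rw [hf]
  refine ⟨continuous_invMaxOne.comp Complex.continuous_re, ⟨0, 2, ?_⟩,
    fun x => ⟨invMaxOne_nonneg _, invMaxOne_le_one _⟩, by fun_prop,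
    liminf_sub_norm_eq_bot (C := 6) fun y => by simp [r], fun x => ?_⟩
  · simp [invMaxOne_of_abs_le_one, invMaxOne_of_one_le_abs]
  have hre (t : ℝ) : (x + (r x : ℂ) * Complex.exp (t * Complex.I)).re =
      x.re + 6 * max 1 (x.re ^ 2) * cos t := by
    rw [Complex.add_re, Complex.re_ofReal_mul, Complex.exp_ofReal_mul_I_re]
  simp only [hre]
  rw [one_div_mul_eq_div, div_le_iff₀' (by positivity)]
  exact integral_invMaxOne_add_mul_cos_le x.re
end

section
/- For x = (x₁, x₂) ∈ ℝ², let f(x) := min{1, |x₁|^{−1}} (with f(x) := 1 when x₁ = 0) and r(x) := 6 max{1, x₁²}. For fixed x ∈ ℝ² set a := max{|x₁|, 1} and A := {y ∈ ℝ² : |y₁| ≤ 2a}. Then the normalized arclength measure of A on the circle of center x and radius r(x) satisfies σ_{x,r(x)}(1_A) ≤ 1/(2a). -/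
/-!
On the circle the real part of `x + r e^{it}` is `x₁ + r cos t`, so the circle meets `A` exactly
where `cos t` lies in an interval of length `4a/r ≤ 2/(3a)` inside `[-1/2, 1/2]`. There
`|sin t| ≥ 1/2`, so on each of `[0, π]` and `[π, 2π]` these `t` form a set of diameter at most
twice that length; the total measure is at most `8/(3a) ≤ π/a`.
-/

open MeasureTheory Real Set

theorem volume_le_ofReal_of_forall_abs_sub_le {S : Set ℝ} {D : ℝ}
    (h : ∀ s ∈ S, ∀ t ∈ S, |s - t| ≤ D) : volume S ≤ ENNReal.ofReal D :=
  (Real.volume_le_diam S).trans (Metric.ediam_le_of_forall_dist_le h)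

theorem Real.half_le_sin_of_abs_cos_le_half {t : ℝ} (ht : t ∈ Icc 0 π) (h : |cos t| ≤ 1 / 2) :
    1 / 2 ≤ sin t := by
  have hsin := sin_nonneg_of_mem_Icc ht
  have hcos := abs_le.mp h
  nlinarith [sin_sq_add_cos_sq t]

theorem Real.abs_sub_le_two_mul_abs_cos_sub_cos {s t : ℝ} (hs : s ∈ Icc 0 π) (ht : t ∈ Icc 0 π)
    (hs' : |cos s| ≤ 1 / 2) (ht' : |cos t| ≤ 1 / 2) : |s - t| ≤ 2 * |cos s - cos t| := by
  wlog hst : s ≤ t generalizing s t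
  · rw [abs_sub_comm, abs_sub_comm (cos s)]
    exact this ht hs ht' hs' (le_of_not_ge hst)
  have hsub : Icc s t ⊆ Icc 0 π := Icc_subset_Icc hs.1 ht.2
  have hcos_between : ∀ u ∈ Icc s t, |cos u| ≤ 1 / 2 := fun u hu => by
    have h1 := strictAntiOn_cos.antitoneOn (hsub hu) ht hu.2
    have h2 := strictAntiOn_cos.antitoneOn hs (hsub hu) hu.1
    rw [abs_le] at *
    constructor <;> linarith
  have key := (convex_Icc s t).mul_sub_le_image_sub_of_le_deriv (f := fun u => -cos u)
    (by fun_prop) (by fun_prop) (C := 1 / 2) (fun u hu => by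
      rw [interior_Icc] at hu
      simpa using half_le_sin_of_abs_cos_le_half (hsub (Ioo_subset_Icc_self hu))
        (hcos_between u (Ioo_subset_Icc_self hu)))
    s (left_mem_Icc.mpr hst) t (right_mem_Icc.mpr hst) hst
  rw [abs_of_nonpos (by linarith), abs_of_nonneg (by linarith)]
  linarith

theorem volume_Ioc_inter_cos_band_le {c r δ : ℝ} (hr : 0 < r) (h : |c| + δ ≤ r / 2) :
    volume (Ioc 0 (2 * π) ∩ {t | |c + r * cos t| ≤ δ}) ≤ ENNReal.ofReal (8 * δ / r) := by
  set B := {t | |c + r * cos t| ≤ δ}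
  have hcos : ∀ t ∈ B, |cos t| ≤ 1 / 2 := fun t ht => by
    have : |r * cos t| ≤ r / 2 :=
      calc |r * cos t| = |(c + r * cos t) - c| := by ring_nf
        _ ≤ |c + r * cos t| + |c| := abs_sub _ _
        _ ≤ r / 2 := by linarith [show |c + r * cos t| ≤ δ from ht]
    rw [abs_mul, abs_of_pos hr] at this
    nlinarith
  have hcos_sub : ∀ s ∈ B, ∀ t ∈ B, 2 * |cos s - cos t| ≤ 4 * δ / r := fun s hs t ht => by
    have : |r * (cos s - cos t)| ≤ 2 * δ :=
      calc |r * (cos s - cos t)| = |(c + r * cos s) - (c + r * cos t)| := by ring_nf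
        _ ≤ |c + r * cos s| + |c + r * cos t| := abs_sub _ _
        _ ≤ 2 * δ := by
          linarith [show |c + r * cos s| ≤ δ from hs, show |c + r * cos t| ≤ δ from ht]
    rw [abs_mul, abs_of_pos hr] at this
    rw [le_div_iff₀ hr]
    linarith
  have hfirst : volume (Icc 0 π ∩ B) ≤ ENNReal.ofReal (4 * δ / r) :=
    volume_le_ofReal_of_forall_abs_sub_le fun s hs t ht =>
      (abs_sub_le_two_mul_abs_cos_sub_cos hs.1 ht.1 (hcos s hs.2) (hcos t ht.2)).trans
        (hcos_sub s hs.2 t ht.2)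
  -- reflect `[π, 2π]` onto `[0, π]` by `t ↦ 2π - t`, which preserves `cos`
  have hsecond : volume (Icc π (2 * π) ∩ B) ≤ ENNReal.ofReal (4 * δ / r) := by
    refine volume_le_ofReal_of_forall_abs_sub_le fun s hs t ht => ?_
    have hmem : ∀ u ∈ Icc π (2 * π), 2 * π - u ∈ Icc 0 π := fun u hu =>
      ⟨by linarith [hu.2], by linarith [hu.1]⟩
    have := abs_sub_le_two_mul_abs_cos_sub_cos (hmem s hs.1) (hmem t ht.1)
      (by rw [cos_two_pi_sub]; exact hcos s hs.2) (by rw [cos_two_pi_sub]; exact hcos t ht.2)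
    rw [cos_two_pi_sub, cos_two_pi_sub, show 2 * π - s - (2 * π - t) = -(s - t) by ring,
      abs_neg] at this
    exact this.trans (hcos_sub s hs.2 t ht.2)
  have hcover : Ioc 0 (2 * π) ∩ B ⊆ (Icc 0 π ∩ B) ∪ (Icc π (2 * π) ∩ B) := by
    rintro t ⟨ht, htB⟩
    rcases le_total t π with h | h
    exacts [Or.inl ⟨⟨ht.1.le, h⟩, htB⟩, Or.inr ⟨⟨h, ht.2⟩, htB⟩]
  calc volume (Ioc 0 (2 * π) ∩ B)
      ≤ volume (Icc 0 π ∩ B) + volume (Icc π (2 * π) ∩ B) :=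
        (measure_mono hcover).trans (measure_union_le _ _)
    _ ≤ ENNReal.ofReal (4 * δ / r) + ENNReal.ofReal (4 * δ / r) := add_le_add hfirst hsecond
    _ = ENNReal.ofReal (8 * δ / r) := by
        rw [show 8 * δ / r = 2 * (4 * δ / r) by ring, ENNReal.ofReal_mul zero_le_two,
          ENNReal.ofReal_ofNat, two_mul]

theorem max_abs_one_sq (u : ℝ) : max |u| 1 ^ 2 = max 1 (u ^ 2) := by
  rcases le_total |u| 1 with h | h
  · rw [max_eq_right h, max_eq_left (by nlinarith [sq_abs u, abs_nonneg u])]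
    norm_num
  · rw [max_eq_left h, max_eq_right (by nlinarith [sq_abs u]), sq_abs]

/-- With `r(x) := 6 max{1, x₁²}` on `ℝ² = ℂ` (writing `x₁ = Re x`), for fixed `x` set
`a := max{|x₁|, 1}` and `A := {y : |y₁| ≤ 2a}`. Then the normalized arclength measure
of `A` on the circle of center `x` and radius `r(x)` satisfies
`σ_{x,r(x)}(1_A) ≤ 1/(2a)`. -/
theorem stmt14 (x : ℂ) :
    (1 / (2 * Real.pi)) * (∫ t in (0:ℝ)..(2 * Real.pi),
      Set.indicator {y : ℂ | |y.re| ≤ 2 * max |x.re| 1} (fun _ => (1:ℝ))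
        (x + (6 * max 1 (x.re ^ 2) : ℝ) * Complex.exp (t * Complex.I)))
    ≤ 1 / (2 * max |x.re| 1) := by
  set a := max |x.re| 1
  set r : ℝ := 6 * max 1 (x.re ^ 2)
  have ha : 1 ≤ a := le_max_right _ _
  have hr : r = 6 * a ^ 2 := by rw [max_abs_one_sq]
  set B := {t : ℝ | |x.re + r * Real.cos t| ≤ 2 * a}
  have hB : MeasurableSet B := (isClosed_le (by fun_prop) continuous_const).measurableSet
  have hintegrand : (fun t : ℝ => indicator {y : ℂ | |y.re| ≤ 2 * a} (fun _ => (1:ℝ))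
      (x + r * Complex.exp (t * Complex.I))) = B.indicator 1 := by
    ext t
    simp [B, indicator_apply, Complex.exp_ofReal_mul_I_re]
  have hvol : volume.real (B ∩ Ioc 0 (2 * π)) ≤ 8 * (2 * a) / r := by
    rw [inter_comm]
    refine ENNReal.toReal_le_of_le_ofReal (by positivity) (volume_Ioc_inter_cos_band_le
      (by positivity) ?_)
    nlinarith [le_max_left |x.re| 1]
  rw [hintegrand, intervalIntegral.integral_of_le (by positivity), integral_indicator_one hB,
    measureReal_restrict_apply hB]
  calc 1 / (2 * π) * volume.real (B ∩ Ioc 0 (2 * π)) ≤ 1 / (2 * π) * (8 * (2 * a) / r) := by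
        gcongr
    _ ≤ 1 / (2 * a) := by
        rw [hr, div_mul_div_comm, div_le_div_iff₀ (by positivity) (by positivity)]
        nlinarith [pi_gt_three]
end

section
/- Let c > 1 and α ∈ (0,1) be such that (c+1)^{1−α} + (c−1)^{1−α} ≤ 2(1−α)c. Then for every x ∈ ℝ with x ≠ 0, (1/(2c|x|))∫_{x−c|x|}^{x+c|x|} |s|^{−α} ds ≤ |x|^{−α}. -/
/-! The interval `[x - c|x|, x + c|x|]` contains `0` and its endpoints lie at distances
`(c - 1)|x|` and `(c + 1)|x|` from it, so integrating `s ↦ |s|^{-α}` separately on either side of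
`0` gives `|x|^{1-α} ((c + 1)^{1-α} + (c - 1)^{1-α}) / (1 - α)`. After dividing by `2c|x|`, the
hypothesis is exactly the required bound. -/

open MeasureTheory Real Set intervalIntegral

lemma intervalIntegrable_abs_rpow {r : ℝ} (hr : -1 < r) (a b : ℝ) :
    IntervalIntegrable (fun s : ℝ => |s| ^ r) volume a b := by
  have from_zero_of_nonneg {t : ℝ} (ht : 0 ≤ t) :
      IntervalIntegrable (fun s : ℝ => |s| ^ r) volume 0 t :=
    (intervalIntegrable_rpow' hr).congr fun s hs => by
      rw [uIoc_of_le ht] at hs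
      simp only [abs_of_pos hs.1]
  have from_zero (t : ℝ) : IntervalIntegrable (fun s : ℝ => |s| ^ r) volume 0 t := by
    rcases le_total 0 t with ht | ht
    · exact from_zero_of_nonneg ht
    · rw [IntervalIntegrable.iff_comp_neg, neg_zero]
      simpa only [abs_neg] using from_zero_of_nonneg (neg_nonneg.2 ht)
  exact (from_zero a).symm.trans (from_zero b)

lemma integral_abs_rpow_of_nonneg {r t : ℝ} (hr : -1 < r) (ht : 0 ≤ t) :
    ∫ s in (0 : ℝ)..t, |s| ^ r = t ^ (r + 1) / (r + 1) := by
  have abs_eqOn : EqOn (fun s : ℝ => |s| ^ r) (fun s => s ^ r) (uIcc 0 t) := fun s hs => by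
    rw [uIcc_of_le ht] at hs
    simp only [abs_of_nonneg hs.1]
  rw [integral_congr abs_eqOn, integral_rpow (Or.inl hr), zero_rpow (by linarith), sub_zero]

lemma integral_abs_rpow_of_nonpos_of_nonneg {r a b : ℝ} (hr : -1 < r) (ha : a ≤ 0) (hb : 0 ≤ b) :
    ∫ s in a..b, |s| ^ r = ((-a) ^ (r + 1) + b ^ (r + 1)) / (r + 1) := by
  have reflect : ∫ s in a..0, |s| ^ r = ∫ s in (0 : ℝ)..(-a), |s| ^ r := by
    simpa only [abs_neg, neg_neg, neg_zero] using
      (integral_comp_neg (a := 0) (b := -a) fun s : ℝ => |s| ^ r).symm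
  rw [← integral_add_adjacent_intervals (intervalIntegrable_abs_rpow hr a 0)
    (intervalIntegrable_abs_rpow hr 0 b), reflect, integral_abs_rpow_of_nonneg hr (by linarith),
    integral_abs_rpow_of_nonneg hr hb, add_div]

lemma integral_abs_rpow_of_abs_le {r x ρ : ℝ} (hr : -1 < r) (hx : |x| ≤ ρ) :
    ∫ s in (x - ρ)..(x + ρ), |s| ^ r = ((ρ + |x|) ^ (r + 1) + (ρ - |x|) ^ (r + 1)) / (r + 1) := by
  have hx_bounds := abs_le.1 hx
  rw [integral_abs_rpow_of_nonpos_of_nonneg hr (by linarith) (by linarith)]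
  rcases abs_cases x with ⟨hx_eq, -⟩ | ⟨hx_eq, -⟩ <;> rw [hx_eq] <;> ring_nf

theorem stmt18_general (c α : ℝ) (hc : 1 < c) (hα1 : α < 1)
    (h : (c + 1) ^ (1 - α) + (c - 1) ^ (1 - α) ≤ 2 * (1 - α) * c) :
    ∀ x : ℝ, x ≠ 0 →
      (1 / (2 * (c * |x|))) * (∫ s in (x - c * |x|)..(x + c * |x|), |s| ^ (-α))
      ≤ |x| ^ (-α) := by
  intro x hx
  have hx0 : 0 < |x| := abs_pos.2 hx
  have hα : 0 < 1 - α := by linarith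
  have hpow : |x| ^ (1 - α) = |x| ^ (-α) * |x| := by
    rw [sub_eq_neg_add, rpow_add hx0, rpow_one]
  rw [integral_abs_rpow_of_abs_le (by linarith) (le_mul_of_one_le_left hx0.le hc.le),
    neg_add_eq_sub, show c * |x| + |x| = (c + 1) * |x| by ring,
    show c * |x| - |x| = (c - 1) * |x| by ring, mul_rpow (by linarith) hx0.le,
    mul_rpow (by linarith) hx0.le, ← add_mul, hpow]
  calc 1 / (2 * (c * |x|)) * (((c + 1) ^ (1 - α) + (c - 1) ^ (1 - α)) * (|x| ^ (-α) * |x|) / (1 - α))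
      = |x| ^ (-α) * (((c + 1) ^ (1 - α) + (c - 1) ^ (1 - α)) / (2 * (1 - α) * c)) := by
        field_simp
    _ ≤ |x| ^ (-α) * 1 := by
        gcongr
        exact (div_le_one (by positivity)).2 h
    _ = |x| ^ (-α) := mul_one _

/-- If `c > 1` and `α ∈ (0,1)` satisfy `(c+1)^{1-α} + (c-1)^{1-α} ≤ 2(1-α)c`, then
for every `x ≠ 0`, `λ_{x,c|x|}(|·|^{-α}) ≤ |x|^{-α}`, i.e.
`(1/(2c|x|)) ∫_{x-c|x|}^{x+c|x|} |s|^{-α} ds ≤ |x|^{-α}`. -/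
theorem stmt18 (c α : ℝ) (hc : 1 < c) (hα0 : 0 < α) (hα1 : α < 1)
    (h : (c + 1) ^ (1 - α) + (c - 1) ^ (1 - α) ≤ 2 * (1 - α) * c) :
    ∀ x : ℝ, x ≠ 0 →
      (1 / (2 * (c * |x|))) * (∫ s in (x - c * |x|)..(x + c * |x|), |s| ^ (-α))
      ≤ |x| ^ (-α) :=
  stmt18_general c α hc hα1 h
end
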